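/- arXiv:1802.06105 — 3 statements merged into one kernel-verified Lean document; each statement's English description precedes it below -/
import Mathlib

section
/- Let $X_1,X_2,\dots$ be i.i.d. in $\mathbb{R}^d$, $N \sim$ Poisson$(n)$ independent of $(X_i)$, $\mathcal{P}_n = \{X_1,\dots,X_N\}$, and $q \geq 2$, $k \geq 1$, $p \in \{k,\dots,qk\}$. Let $h_1,\dots,h_q : (\mathbb{R}^d)^k \to \mathbb{R}$ be bounded measurable functions vanishing on diagonals. Then $\mathbb{E}\Big[\sum_{\mathcal{X}_1} \cdots \sum_{\mathcal{X}_q} \prod_{j=1}^q h_j(\mathcal{X}_j)\, \mathbf{1}\{|\cup_{i=1}^q \mathcal{X}_i| = p\}\Big] = \frac{n^p}{p!} \sum_{\sigma \in \Sigma^*_{qk,p}} \mathbb{E}\Big[\prod_{j=1}^q h_j(X_{\sigma((j-1)k+1)},\dots,X_{\sigma(jk)})\Big]$, where each $\mathcal{X}_j$ ranges over ordered $k$-tuples of distinct points of $\mathcal{P}_n$, and $\Sigma^*_{qk,p}$ is the set of surjections $\sigma : [qk] \to [p]$ such that $\sigma((j-1)k+1),\dots,\sigma(jk)$ are distinct for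 each $j = 1,\dots,q$. -/
open MeasureTheory ProbabilityTheory Finset
open scoped Classical Nat

noncomputable section AuxPalm


lemma jointLaw {Ω : Type*} [MeasureSpace Ω] [IsProbabilityMeasure (ℙ : Measure Ω)]
    {E : Type*} [MeasurableSpace E] (X : ℕ → Ω → E) (hXmeas : ∀ i, Measurable (X i))
    (hXindep : iIndepFun X ℙ)
    (hXident : ∀ i, Measure.map (X i) ℙ = Measure.map (X 0) ℙ)
    (t : ℕ) (e : Fin t → ℕ) (he : Function.Injective e) :
    Measure.map (fun ω s => X (e s) ω) ℙ
      = Measure.pi (fun _ : Fin t => Measure.map (X 0) ℙ) := by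
  haveI hP : IsProbabilityMeasure (Measure.map (X 0) ℙ) :=
    Measure.isProbabilityMeasure_map (hXmeas 0).aemeasurable
  have hmeasvec : Measurable (fun ω (s : Fin t) => X (e s) ω) :=
    measurable_pi_lambda _ fun s => hXmeas (e s)
  refine (Measure.pi_eq (μ := fun _ : Fin t => Measure.map (X 0) ℙ) fun A hA => ?_).symm
  rw [Measure.map_apply hmeasvec (MeasurableSet.univ_pi hA)]
  -- the preimage is ⋂ s, X (e s) ⁻¹' A s
  have hpre : (fun ω (s : Fin t) => X (e s) ω) ⁻¹' (Set.pi Set.univ A)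
      = ⋂ s, X (e s) ⁻¹' A s := by
    ext ω; simp [Set.mem_pi]
  rw [hpre]
  -- define sets indexed by ℕ
  set B : ℕ → Set E := fun i => if hi : ∃ s, e s = i then A hi.choose else Set.univ with hB
  have hBe : ∀ s, B (e s) = A s := by
    intro s
    have hex : ∃ s', e s' = e s := ⟨s, rfl⟩
    have : hex.choose = s := he hex.choose_spec
    simp [hB, dif_pos hex, this]
  have key := hXindep.measure_inter_preimage_eq_mul (S := Finset.image e Finset.univ) (sets := B)
    (fun i _ => by
      by_cases hi : ∃ s, e s = i
      · simpa [hB, dif_pos hi] using hA hi.choose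
      · simpa [hB, dif_neg hi] using MeasurableSet.univ)
  have hiInter : (⋂ s, X (e s) ⁻¹' A s) = ⋂ i ∈ Finset.image e Finset.univ, X i ⁻¹' B i := by
    ext ω
    simp only [Set.mem_iInter, Finset.mem_image, Finset.mem_univ, true_and, Set.mem_preimage]
    constructor
    · rintro hω i ⟨s, rfl⟩; rw [hBe s]; exact hω s
    · intro hω s; rw [← hBe s]; exact hω (e s) ⟨s, rfl⟩
  rw [hiInter, key, Finset.prod_image (fun s _ s' _ hss' => he hss')]
  refine Finset.prod_congr rfl fun s _ => ?_
  rw [hBe s, ← Measure.map_apply (hXmeas (e s)) (hA s), hXident (e s)]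


section Exch
variable {Ω : Type*} [MeasureSpace Ω] [IsProbabilityMeasure (ℙ : Measure Ω)]
  {E : Type*} [MeasurableSpace E] (X : ℕ → Ω → E)

lemma exchangeInt (hXmeas : ∀ i, Measurable (X i))
    (hXindep : iIndepFun X ℙ)
    (hXident : ∀ i, Measure.map (X i) ℙ = Measure.map (X 0) ℙ)
    {t : ℕ} (e : Fin t → ℕ) (he : Function.Injective e)
    (G : (Fin t → E) → ℝ) (hG : Measurable G) :
    ∫ ω, G (fun s => X (e s) ω) ∂ℙ
      = ∫ y, G y ∂(Measure.pi (fun _ : Fin t => Measure.map (X 0) ℙ)) := by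
  have hmeasvec : Measurable (fun ω (s : Fin t) => X (e s) ω) :=
    measurable_pi_lambda _ fun s => hXmeas (e s)
  rw [← jointLaw X hXmeas hXindep hXident t e he,
    integral_map hmeasvec.aemeasurable hG.aestronglyMeasurable]

variable {q k : ℕ} (h : Fin q → (Fin k → E) → ℝ)

lemma prodMeas (hmeas : ∀ j, Measurable (h j)) (σ : Fin q → Fin k → ℕ) :
    Measurable (fun x : ℕ → E => ∏ j, h j (fun i => x (σ j i))) := by
  refine Finset.measurable_prod _ fun j _ => ?_
  exact (hmeas j).comp (measurable_pi_lambda _ fun i => measurable_pi_apply _)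

lemma exchangeProd (hmeas : ∀ j, Measurable (h j)) (hXmeas : ∀ i, Measurable (X i))
    (hXindep : iIndepFun X ℙ)
    (hXident : ∀ i, Measure.map (X i) ℙ = Measure.map (X 0) ℙ)
    {p : ℕ} (σ : Fin q → Fin k → Fin p) (e : Fin p → ℕ) (he : Function.Injective e) :
    ∫ ω, ∏ j, h j (fun i => X (e (σ j i)) ω) ∂ℙ
      = ∫ y : Fin p → E, ∏ j, h j (fun i => y (σ j i))
          ∂(Measure.pi (fun _ : Fin p => Measure.map (X 0) ℙ)) := by
  have hG : Measurable (fun y : Fin p → E => ∏ j, h j (fun i => y (σ j i))) := by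
    refine Finset.measurable_prod _ fun j _ => ?_
    exact (hmeas j).comp (measurable_pi_lambda _ fun i => measurable_pi_apply _)
  exact exchangeInt X hXmeas hXindep hXident e he _ hG

end Exch


section Comb
variable {q k m p : ℕ}

def Phi (gσ : (Fin p → Fin m) × (Fin q → Fin k → Fin p)) : Fin q → Fin k → Fin m :=
  fun j i => gσ.1 (gσ.2 j i)

lemma fiber_card (F : Fin q → Fin k → Fin m) :
    (Finset.univ.filter fun gσ : (Fin p → Fin m) × (Fin q → Fin k → Fin p) =>
        Phi gσ = F ∧ Function.Injective gσ.1 ∧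
          ((∀ y, ∃ j i, gσ.2 j i = y) ∧ (∀ j, Function.Injective (gσ.2 j)))).card
      = if (∀ j, Function.Injective (F j)) ∧
          (Finset.image (fun x : Fin q × Fin k => F x.1 x.2) Finset.univ).card = p
        then p.factorial else 0 := by
  by_cases hcond : (∀ j, Function.Injective (F j)) ∧
      (Finset.image (fun x : Fin q × Fin k => F x.1 x.2) Finset.univ).card = p
  · rw [if_pos hcond]
    obtain ⟨hrow, hs⟩ := hcond
    set s := Finset.image (fun x : Fin q × Fin k => F x.1 x.2) Finset.univ with hsdef
    have hmemF : ∀ j i, F j i ∈ s := fun j i =>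
      Finset.mem_image.2 ⟨(j, i), Finset.mem_univ _, rfl⟩
    rw [← Fintype.card_subtype]
    have hcards : Fintype.card {y // y ∈ s} = p := by
      rw [Fintype.card_coe]; exact hs
    have fwd : ∀ x : {gσ : (Fin p → Fin m) × (Fin q → Fin k → Fin p) //
        Phi gσ = F ∧ Function.Injective gσ.1 ∧
          ((∀ y, ∃ j i, gσ.2 j i = y) ∧ (∀ j, Function.Injective (gσ.2 j)))},
        ∀ t : Fin p, x.1.1 t ∈ s := by
      intro x t
      obtain ⟨hΦ, hg, hsurj, hσ⟩ := x.2
      obtain ⟨j, i, hji⟩ := hsurj t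
      have h1 : x.1.1 t = F j i := by
        rw [← hji]; exact congrFun (congrFun hΦ j) i
      rw [h1]; exact hmemF j i
    let Fwd : {gσ : (Fin p → Fin m) × (Fin q → Fin k → Fin p) //
        Phi gσ = F ∧ Function.Injective gσ.1 ∧
          ((∀ y, ∃ j i, gσ.2 j i = y) ∧ (∀ j, Function.Injective (gσ.2 j)))}
        → (Fin p ≃ {y // y ∈ s}) := fun x =>
      Equiv.ofBijective (fun t => ⟨x.1.1 t, fwd x t⟩)
        ((Fintype.bijective_iff_injective_and_card _).2
          ⟨fun a b hab => x.2.2.1 (by simpa using congrArg Subtype.val hab), by simp [hcards]⟩)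
    have hFwdBij : Function.Bijective Fwd := by
      constructor
      · intro x x' hFF
        obtain ⟨hΦ, hg, hsurj, hσ⟩ := x.2
        obtain ⟨hΦ', hg', hsurj', hσ'⟩ := x'.2
        have hgg : x.1.1 = x'.1.1 := funext fun t => by
          have := congrArg (fun (e : Fin p ≃ {y // y ∈ s}) => (e t : Fin m)) hFF
          simpa [Fwd] using this
        refine Subtype.ext (Prod.ext hgg ?_)
        funext j i
        apply hg
        have h1 : x.1.1 (x.1.2 j i) = F j i := congrFun (congrFun hΦ j) i
        have h2 : x'.1.1 (x'.1.2 j i) = F j i := congrFun (congrFun hΦ' j) i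
        rw [h1, hgg, h2]
      · intro e
        refine ⟨⟨(fun t => (e t : Fin m), fun j i => e.symm ⟨F j i, hmemF j i⟩), ?_, ?_, ?_, ?_⟩, ?_⟩
        · funext j i
          show (e (e.symm ⟨F j i, hmemF j i⟩) : Fin m) = F j i
          rw [Equiv.apply_symm_apply]
        · intro a b hab; exact e.injective (Subtype.ext hab)
        · intro y
          have hy : (e y : Fin m) ∈ Finset.image
              (fun x : Fin q × Fin k => F x.1 x.2) Finset.univ := hsdef ▸ (e y).2
          obtain ⟨x, -, hx⟩ := Finset.mem_image.1 hy
          refine ⟨x.1, x.2, ?_⟩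
          show e.symm ⟨F x.1 x.2, hmemF x.1 x.2⟩ = y
          exact (e.symm_apply_eq).2 (Subtype.ext hx)
        · intro j a b hab
          have hab' := congrArg e hab
          simp only [Equiv.apply_symm_apply] at hab'
          exact hrow j (congrArg Subtype.val hab')
        · ext t
          simp [Fwd]
    rw [Fintype.card_congr (Equiv.ofBijective Fwd hFwdBij),
      Fintype.card_equiv (Fintype.equivOfCardEq (by simp [hcards]))]
    simp
  · rw [if_neg hcond, Finset.card_eq_zero, Finset.filter_eq_empty_iff]
    rintro ⟨g, σ⟩ -
    rintro ⟨hΦ, hg, hsurj, hσ⟩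
    refine hcond ⟨fun j a b hab => ?_, ?_⟩
    · have ha : F j a = g (σ j a) := (congrFun (congrFun hΦ j) a).symm
      have hb : F j b = g (σ j b) := (congrFun (congrFun hΦ j) b).symm
      refine hσ j (hg ?_)
      show g (σ j a) = g (σ j b)
      rw [← ha, ← hb]; exact hab
    · have him : Finset.image (fun x : Fin q × Fin k => F x.1 x.2) Finset.univ
          = Finset.image g Finset.univ := by
        apply Finset.Subset.antisymm
        · intro y hy
          obtain ⟨x, -, hx⟩ := Finset.mem_image.1 hy
          refine Finset.mem_image.2 ⟨σ x.1 x.2, Finset.mem_univ _, ?_⟩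
          rw [← hx]; exact congrFun (congrFun hΦ x.1) x.2
        · intro y hy
          obtain ⟨t, -, ht⟩ := Finset.mem_image.1 hy
          obtain ⟨j, i, hji⟩ := hsurj t
          refine Finset.mem_image.2 ⟨(j, i), Finset.mem_univ _, ?_⟩
          show F j i = y
          rw [← ht, ← hji]; exact (congrFun (congrFun hΦ j) i).symm
      rw [him, Finset.card_image_of_injective _ hg]
      simp

end Comb


lemma comb {q k m p : ℕ} (J : (Fin q → Fin k → Fin m) → ℝ) (c : (Fin q → Fin k → Fin p) → ℝ)
    (hJ : ∀ (g : Fin p → Fin m) (σ : Fin q → Fin k → Fin p), Function.Injective g →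
      J (fun j i => g (σ j i)) = c σ) :
    (p.factorial : ℝ) * ∑ F : Fin q → Fin k → Fin m,
        (if (∀ j, Function.Injective (F j)) ∧
            (Finset.image (fun x : Fin q × Fin k => F x.1 x.2) Finset.univ).card = p
          then J F else 0)
      = (m.descFactorial p : ℝ) * ∑ σ : Fin q → Fin k → Fin p,
          (if (∀ y, ∃ j i, σ j i = y) ∧ (∀ j, Function.Injective (σ j)) then c σ else 0) := by
  have key : ∀ gσ : (Fin p → Fin m) × (Fin q → Fin k → Fin p),
      (if Function.Injective gσ.1 ∧
          ((∀ y, ∃ j i, gσ.2 j i = y) ∧ (∀ j, Function.Injective (gσ.2 j)))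
        then J (Phi gσ) else 0)
      = (if Function.Injective gσ.1 ∧
          ((∀ y, ∃ j i, gσ.2 j i = y) ∧ (∀ j, Function.Injective (gσ.2 j)))
        then c gσ.2 else 0) := by
    intro gσ
    by_cases hc : Function.Injective gσ.1 ∧
        ((∀ y, ∃ j i, gσ.2 j i = y) ∧ (∀ j, Function.Injective (gσ.2 j)))
    · rw [if_pos hc, if_pos hc]; exact hJ gσ.1 gσ.2 hc.1
    · rw [if_neg hc, if_neg hc]
  -- Claim B : LHS of claim
  have claimB : ∑ gσ : (Fin p → Fin m) × (Fin q → Fin k → Fin p),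
      (if Function.Injective gσ.1 ∧
          ((∀ y, ∃ j i, gσ.2 j i = y) ∧ (∀ j, Function.Injective (gσ.2 j)))
        then J (Phi gσ) else 0)
      = (p.factorial : ℝ) * ∑ F : Fin q → Fin k → Fin m,
        (if (∀ j, Function.Injective (F j)) ∧
            (Finset.image (fun x : Fin q × Fin k => F x.1 x.2) Finset.univ).card = p
          then J F else 0) := by
    rw [← Finset.sum_fiberwise_of_maps_to (g := Phi)
      (fun gσ _ => Finset.mem_univ (Phi gσ)) _]
    rw [Finset.mul_sum]
    refine Finset.sum_congr rfl fun F _ => ?_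
    have step1 : ∑ gσ ∈ Finset.univ.filter
        (fun gσ : (Fin p → Fin m) × (Fin q → Fin k → Fin p) => Phi gσ = F),
        (if Function.Injective gσ.1 ∧
            ((∀ y, ∃ j i, gσ.2 j i = y) ∧ (∀ j, Function.Injective (gσ.2 j)))
          then J (Phi gσ) else 0)
        = ∑ gσ ∈ Finset.univ.filter
          (fun gσ : (Fin p → Fin m) × (Fin q → Fin k → Fin p) => Phi gσ = F),
          (if Function.Injective gσ.1 ∧
              ((∀ y, ∃ j i, gσ.2 j i = y) ∧ (∀ j, Function.Injective (gσ.2 j)))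
            then J F else 0) := by
      refine Finset.sum_congr rfl fun gσ hgσ => ?_
      rw [(Finset.mem_filter.1 hgσ).2]
    rw [step1, ← Finset.sum_filter, Finset.filter_filter, Finset.sum_const, fiber_card F]
    by_cases hcond : (∀ j, Function.Injective (F j)) ∧
        (Finset.image (fun x : Fin q × Fin k => F x.1 x.2) Finset.univ).card = p
    · rw [if_pos hcond, if_pos hcond, nsmul_eq_mul]
    · rw [if_neg hcond, if_neg hcond, zero_smul, mul_zero]
  -- Claim A
  have claimA : ∑ gσ : (Fin p → Fin m) × (Fin q → Fin k → Fin p),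
      (if Function.Injective gσ.1 ∧
          ((∀ y, ∃ j i, gσ.2 j i = y) ∧ (∀ j, Function.Injective (gσ.2 j)))
        then c gσ.2 else 0)
      = (m.descFactorial p : ℝ) * ∑ σ : Fin q → Fin k → Fin p,
          (if (∀ y, ∃ j i, σ j i = y) ∧ (∀ j, Function.Injective (σ j)) then c σ else 0) := by
    rw [Fintype.sum_prod_type]
    have inner : ∀ g : Fin p → Fin m,
        (∑ σ : Fin q → Fin k → Fin p,
          if Function.Injective g ∧
              ((∀ y, ∃ j i, σ j i = y) ∧ (∀ j, Function.Injective (σ j)))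
            then c σ else 0)
        = if Function.Injective g then
            (∑ σ : Fin q → Fin k → Fin p,
              if (∀ y, ∃ j i, σ j i = y) ∧ (∀ j, Function.Injective (σ j)) then c σ else 0)
          else 0 := by
      intro g
      by_cases hg : Function.Injective g
      · rw [if_pos hg]
        refine Finset.sum_congr rfl fun σ _ => ?_
        by_cases hσ : (∀ y, ∃ j i, σ j i = y) ∧ (∀ j, Function.Injective (σ j))
        · rw [if_pos ⟨hg, hσ⟩, if_pos hσ]
        · rw [if_neg (by tauto), if_neg hσ]
      · rw [if_neg hg]
        refine Finset.sum_eq_zero fun σ _ => ?_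
        rw [if_neg (by tauto)]
    simp_rw [inner]
    rw [← Finset.sum_filter, Finset.sum_const, nsmul_eq_mul]
    congr 2
    rw [← Fintype.card_subtype,
      Fintype.card_congr (Equiv.subtypeInjectiveEquivEmbedding (Fin p) (Fin m)),
      Fintype.card_embedding_eq]
    simp
  rw [← claimB]
  rw [← claimA]
  exact Finset.sum_congr rfl fun gσ _ => key gσ


variable {E : Type*} [MeasurableSpace E]

def Sfun {q k : ℕ} (h : Fin q → (Fin k → E) → ℝ) (p m : ℕ) (x : ℕ → E) : ℝ :=
  ∑ F : Fin q → Fin k → Fin m,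
    if (∀ j, Function.Injective (F j)) ∧
        (Finset.image (fun z : Fin q × Fin k => F z.1 z.2) Finset.univ).card = p
      then ∏ j, h j (fun i => x (F j i).1) else 0

lemma Sfun_measurable {q k : ℕ} (h : Fin q → (Fin k → E) → ℝ)
    (hmeas : ∀ j, Measurable (h j)) (p m : ℕ) : Measurable (Sfun h p m) := by
  refine Finset.measurable_sum _ fun F _ => ?_
  by_cases hc : (∀ j, Function.Injective (F j)) ∧
      (Finset.image (fun z : Fin q × Fin k => F z.1 z.2) Finset.univ).card = p
  · simp only [if_pos hc]
    refine Finset.measurable_prod _ fun j _ => ?_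
    exact (hmeas j).comp (measurable_pi_lambda _ fun i => measurable_pi_apply _)
  · simp only [if_neg hc]; exact measurable_const

lemma prod_bound {q k : ℕ} (h : Fin q → (Fin k → E) → ℝ) (C : ℝ) (hC0 : 0 ≤ C)
    (hbdd : ∀ j v, |h j v| ≤ C) (v : Fin q → Fin k → E) :
    |∏ j, h j (v j)| ≤ C ^ q := by
  calc |∏ j, h j (v j)| = ∏ j, |h j (v j)| := Finset.abs_prod _ _
  _ ≤ ∏ _j : Fin q, C :=
    Finset.prod_le_prod (fun j _ => abs_nonneg _) (fun j _ => hbdd j (v j))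
  _ = C ^ q := by simp [Finset.prod_const]

lemma Sfun_bound {q k : ℕ} (h : Fin q → (Fin k → E) → ℝ) (C : ℝ) (hC0 : 0 ≤ C)
    (hbdd : ∀ j v, |h j v| ≤ C) (p m : ℕ) (x : ℕ → E) :
    |Sfun h p m x| ≤ (((m ^ k) ^ q : ℕ) : ℝ) * C ^ q := by
  have hterm : ∀ F : Fin q → Fin k → Fin m,
      |if (∀ j, Function.Injective (F j)) ∧
          (Finset.image (fun z : Fin q × Fin k => F z.1 z.2) Finset.univ).card = p
        then ∏ j, h j (fun i => x (F j i).1) else 0| ≤ C ^ q := by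
    intro F
    by_cases hc : (∀ j, Function.Injective (F j)) ∧
        (Finset.image (fun z : Fin q × Fin k => F z.1 z.2) Finset.univ).card = p
    · rw [if_pos hc]; exact prod_bound h C hC0 hbdd _
    · rw [if_neg hc]; simpa using pow_nonneg hC0 q
  calc |Sfun h p m x| ≤ ∑ F : Fin q → Fin k → Fin m,
      |if (∀ j, Function.Injective (F j)) ∧
          (Finset.image (fun z : Fin q × Fin k => F z.1 z.2) Finset.univ).card = p
        then ∏ j, h j (fun i => x (F j i).1) else 0| := Finset.abs_sum_le_sum_abs _ _
  _ ≤ ∑ _F : Fin q → Fin k → Fin m, C ^ q := Finset.sum_le_sum fun F _ => hterm F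
  _ = (((m ^ k) ^ q : ℕ) : ℝ) * C ^ q := by
    rw [Finset.sum_const, Finset.card_univ, nsmul_eq_mul]
    congr 1
    simp [Fintype.card_fun]

-- Poisson factorial moment
lemma poisson_moment (n : NNReal) (p : ℕ) :
    ∑' m : ℕ, ProbabilityTheory.poissonPMFReal n m * (m.descFactorial p : ℝ)
      = (n : ℝ) ^ p := by
  have hshift : ∑' m : ℕ,
      ProbabilityTheory.poissonPMFReal n m * (m.descFactorial p : ℝ)
      = ∑' l : ℕ, ProbabilityTheory.poissonPMFReal n (l + p) * ((l + p).descFactorial p : ℝ) := by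
    refine (Function.Injective.tsum_eq (g := fun l => l + p) (add_left_injective p) ?_).symm
    intro m hm
    simp only [Function.mem_support] at hm
    have hmp : p ≤ m := by
      by_contra hlt
      push_neg at hlt
      rw [Nat.descFactorial_eq_zero_iff_lt.2 hlt] at hm
      simp at hm
    exact ⟨m - p, show m - p + p = m by omega⟩
  rw [hshift]
  have hval : ∀ l : ℕ, ProbabilityTheory.poissonPMFReal n (l + p) * ((l + p).descFactorial p : ℝ)
      = (n : ℝ) ^ p * ProbabilityTheory.poissonPMFReal n l := by
    intro l
    unfold ProbabilityTheory.poissonPMFReal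
    have hfac : (l ! : ℝ) * ((l + p).descFactorial p : ℝ) = ((l + p)! : ℝ) := by
      have h2 := Nat.factorial_mul_descFactorial (n := l + p) (k := p) (by omega)
      rw [Nat.add_sub_cancel] at h2
      exact_mod_cast h2
    have hl : (l ! : ℝ) ≠ 0 := Nat.cast_ne_zero.2 (Nat.factorial_ne_zero l)
    have hlp : ((l + p)! : ℝ) ≠ 0 := Nat.cast_ne_zero.2 (Nat.factorial_ne_zero (l + p))
    field_simp
    linear_combination (↑n ^ l * ↑n ^ p) * hfac
  simp_rw [hval]
  rw [tsum_mul_left, show ∑' x, poissonPMFReal n x = 1 from (ProbabilityTheory.poissonPMFRealSum n).tsum_eq, mul_one]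

-- summability of poisson moments
lemma poisson_summable (n : NNReal) (c : ℝ) (K : ℕ) :
    Summable (fun m : ℕ => ((m ^ K : ℕ) : ℝ) * c * ProbabilityTheory.poissonPMFReal n m) := by
  have hle : ∀ m : ℕ, ‖((m ^ K : ℕ) : ℝ) * c * ProbabilityTheory.poissonPMFReal n m‖
      ≤ |c| * Real.exp (-(n : ℝ)) * (((2 ^ K : ℕ) : ℝ) * n) ^ m / m ! := by
    intro m
    have hpm : ((m ^ K : ℕ) : ℝ) ≤ (((2 ^ K : ℕ) : ℝ)) ^ m := by
      have h1 : m ^ K ≤ (2 ^ m) ^ K := Nat.pow_le_pow_left (le_of_lt Nat.lt_two_pow_self) K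
      have h2 : (2 ^ m) ^ K = (2 ^ K) ^ m := by rw [← pow_mul, ← pow_mul, Nat.mul_comm]
      exact_mod_cast h1.trans_eq h2
    have hp0 : (0:ℝ) ≤ ProbabilityTheory.poissonPMFReal n m :=
      ProbabilityTheory.poissonPMFReal_nonneg
    rw [Real.norm_eq_abs, abs_mul, abs_mul, abs_of_nonneg hp0, Nat.abs_cast]
    unfold ProbabilityTheory.poissonPMFReal
    rw [mul_pow]
    have hfpos : (0:ℝ) < m ! := by positivity
    have hexp : (0:ℝ) < Real.exp (-(n:ℝ)) := Real.exp_pos _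
    calc ((m ^ K : ℕ) : ℝ) * |c| * (Real.exp (-(n:ℝ)) * (n:ℝ) ^ m / m !)
        ≤ (((2 ^ K : ℕ) : ℝ)) ^ m * |c| * (Real.exp (-(n:ℝ)) * (n:ℝ) ^ m / m !) := by
          apply mul_le_mul_of_nonneg_right (mul_le_mul_of_nonneg_right hpm (abs_nonneg c))
          positivity
      _ = |c| * Real.exp (-(n:ℝ)) * ((((2 ^ K : ℕ) : ℝ)) ^ m * (n:ℝ) ^ m) / m ! := by ring
  refine Summable.of_norm_bounded ?_ hle
  have := (Real.summable_pow_div_factorial (((2 ^ K : ℕ) : ℝ) * (n : ℝ))).mul_left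
    (|c| * Real.exp (-(n : ℝ)))
  simpa [mul_div_assoc] using this


variable {Ω : Type*} [MeasureSpace Ω] [IsProbabilityMeasure (ℙ : Measure Ω)]

lemma stepA (X : ℕ → Ω → E) (N : Ω → ℕ) (hXmeas : ∀ i, Measurable (X i))
    (hNmeas : Measurable N) (n : NNReal) (hN : Measure.map N ℙ = poissonMeasure n)
    (hNindep : IndepFun N (fun ω => fun i => X i ω) ℙ)
    (S : ℕ → (ℕ → E) → ℝ) (hSmeas : ∀ m, Measurable (S m))
    (Bnd : ℕ → ℝ) (hBnd0 : ∀ m, 0 ≤ Bnd m)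
    (hBnd : ∀ m x, |S m x| ≤ Bnd m)
    (hsum : Summable fun m => Bnd m * poissonPMFReal n m) :
    ∫ ω, S (N ω) (fun i => X i ω) ∂ℙ
      = ∑' m : ℕ, poissonPMFReal n m * ∫ ω, S m (fun i => X i ω) ∂ℙ := by
  set Xvec : Ω → ℕ → E := fun ω i => X i ω with hXvec
  have hXvecMeas : Measurable Xvec := measurable_pi_lambda _ fun i => hXmeas i
  set f : ℕ → Ω → ℝ := fun m ω => (if N ω = m then (1:ℝ) else 0) * S m (Xvec ω) with hf
  have hNm : ∀ m : ℕ, ℙ (N ⁻¹' {m}) = ENNReal.ofReal (poissonPMFReal n m) := by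
    intro m
    rw [← Measure.map_apply hNmeas (measurableSet_singleton m), hN]
    rw [poissonMeasure_singleton]
    rfl
  have hfmeas : ∀ m, Measurable (f m) := by
    intro m
    exact ((Measurable.of_discrete (f := fun x : ℕ => if x = m then (1:ℝ) else 0)).comp
      hNmeas).mul ((hSmeas m).comp hXvecMeas)
  have hptwise : ∀ ω, S (N ω) (Xvec ω) = ∑' m, f m ω := by
    intro ω
    rw [tsum_eq_single (N ω) (fun m hm => by simp [hf, Ne.symm hm])]
    simp [hf]
  have hbound : ∀ m ω, (‖f m ω‖₊ : ENNReal) ≤ (N ⁻¹' {m}).indicator (fun _ => ENNReal.ofReal (Bnd m)) ω := by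
    intro m ω
    by_cases hω : N ω = m
    · have hmem : ω ∈ N ⁻¹' {m} := hω
      rw [Set.indicator_of_mem hmem]
      have heq : f m ω = S m (Xvec ω) := by simp [hf, hω]
      rw [heq, show ((‖S m (Xvec ω)‖₊ : ENNReal)) = ENNReal.ofReal |S m (Xvec ω)| by rw [← Real.enorm_eq_ofReal_abs]; rfl]
      exact ENNReal.ofReal_le_ofReal (hBnd m (Xvec ω))
    · have hmem : ω ∉ N ⁻¹' {m} := hω
      rw [Set.indicator_of_notMem hmem]
      have heq : f m ω = 0 := by simp [hf, hω]
      simp [heq]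
  have hlint : ∀ m : ℕ, ∫⁻ ω, ‖f m ω‖₊ ∂ℙ ≤ ENNReal.ofReal (Bnd m * poissonPMFReal n m) := by
    intro m
    calc ∫⁻ ω, ‖f m ω‖₊ ∂ℙ
        ≤ ∫⁻ ω, (N ⁻¹' {m}).indicator (fun _ => ENNReal.ofReal (Bnd m)) ω ∂ℙ :=
          lintegral_mono fun ω => hbound m ω
      _ = ENNReal.ofReal (Bnd m) * ℙ (N ⁻¹' {m}) := by
          rw [lintegral_indicator (hNmeas (measurableSet_singleton m))]
          simp [mul_comm]
      _ = ENNReal.ofReal (Bnd m * poissonPMFReal n m) := by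
          rw [hNm m, ← ENNReal.ofReal_mul (hBnd0 m)]
  have hne : ∑' m : ℕ, ∫⁻ ω, ‖f m ω‖₊ ∂ℙ ≠ ⊤ := by
    refine ne_top_of_le_ne_top ?_ (ENNReal.tsum_le_tsum hlint)
    rw [← ENNReal.ofReal_tsum_of_nonneg
      (fun m => mul_nonneg (hBnd0 m) poissonPMFReal_nonneg) hsum]
    exact ENNReal.ofReal_ne_top
  calc ∫ ω, S (N ω) (Xvec ω) ∂ℙ = ∫ ω, ∑' m, f m ω ∂ℙ := by
        exact integral_congr_ae (ae_of_all _ hptwise)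
    _ = ∑' m, ∫ ω, f m ω ∂ℙ :=
        integral_tsum (fun m => (hfmeas m).aestronglyMeasurable) hne
    _ = ∑' m : ℕ, poissonPMFReal n m * ∫ ω, S m (Xvec ω) ∂ℙ := by
        refine tsum_congr fun m => ?_
        have hindep : IndepFun (fun ω => if N ω = m then (1:ℝ) else 0)
            (fun ω => S m (Xvec ω)) ℙ :=
          hNindep.comp (Measurable.of_discrete (f := fun x : ℕ => if x = m then (1:ℝ) else 0))
            (hSmeas m)
        have hint1 : Integrable (fun ω => if N ω = m then (1:ℝ) else 0) ℙ := by
          refine (integrable_const (1:ℝ)).mono'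
            (((Measurable.of_discrete (f := fun x : ℕ => if x = m then (1:ℝ) else 0)).comp
              hNmeas)).aestronglyMeasurable (ae_of_all _ fun ω => ?_)
          by_cases hω : N ω = m <;> simp [hω]
        have hint2 : Integrable (fun ω => S m (Xvec ω)) ℙ := by
          refine (integrable_const (Bnd m)).mono'
            ((hSmeas m).comp hXvecMeas).aestronglyMeasurable (ae_of_all _ fun ω => ?_)
          simpa using hBnd m (Xvec ω)
        have hmul := hindep.integral_mul_eq_mul_integral hint1.aestronglyMeasurable hint2.aestronglyMeasurable
        simp only [Pi.mul_apply] at hmul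
        rw [hf]
        simp only
        rw [show (∫ (ω : Ω), (if N ω = m then (1:ℝ) else 0) * S m (Xvec ω) ∂ℙ)
            = integral ℙ ((fun ω => if N ω = m then (1:ℝ) else 0) * fun ω => S m (Xvec ω))
          from rfl, show integral ℙ ((fun ω => if N ω = m then (1:ℝ) else 0) * fun ω => S m (Xvec ω)) = _ from hmul]
        congr 1
        have : (fun ω => if N ω = m then (1:ℝ) else 0)
            = (N ⁻¹' {m}).indicator (fun _ => (1:ℝ)) := by
          funext ω; by_cases hω : N ω = m <;> simp [hω, Set.indicator]
        rw [this, integral_indicator_const _ (hNmeas (measurableSet_singleton m)), measureReal_def, hNm m]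
        simp [ENNReal.toReal_ofReal poissonPMFReal_nonneg]


lemma perM (X : ℕ → Ω → E) (hXmeas : ∀ i, Measurable (X i))
    (hXindep : iIndepFun X ℙ)
    (hXident : ∀ i, Measure.map (X i) ℙ = Measure.map (X 0) ℙ)
    {q k : ℕ} (h : Fin q → (Fin k → E) → ℝ) (hmeas : ∀ j, Measurable (h j))
    (C : ℝ) (hC0 : 0 ≤ C) (hbdd : ∀ j v, |h j v| ≤ C) (p m : ℕ) :
    ∫ ω, Sfun h p m (fun i => X i ω) ∂ℙ
      = ((m.descFactorial p : ℝ) / (p.factorial : ℝ)) *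
          ∑ σ : Fin q → Fin k → Fin p,
            if (∀ y, ∃ j i, σ j i = y) ∧ (∀ j, Function.Injective (σ j))
            then ∫ ω, ∏ j, h j (fun i => X (σ j i).1 ω) ∂ℙ else 0 := by
  have hprodmeas : ∀ F : Fin q → Fin k → Fin m,
      Measurable (fun ω => ∏ j, h j (fun i => X (F j i).1 ω)) := by
    intro F
    exact Finset.measurable_prod _ fun j _ =>
      (hmeas j).comp (measurable_pi_lambda _ fun i => hXmeas _)
  have hInt : ∀ F : Fin q → Fin k → Fin m,
      Integrable (fun ω => if (∀ j, Function.Injective (F j)) ∧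
          (Finset.image (fun z : Fin q × Fin k => F z.1 z.2) Finset.univ).card = p
        then ∏ j, h j (fun i => X (F j i).1 ω) else 0) ℙ := by
    intro F
    by_cases hc : (∀ j, Function.Injective (F j)) ∧
        (Finset.image (fun z : Fin q × Fin k => F z.1 z.2) Finset.univ).card = p
    · simp only [if_pos hc]
      refine (integrable_const (C ^ q)).mono' (hprodmeas F).aestronglyMeasurable
        (ae_of_all _ fun ω => ?_)
      rw [Real.norm_eq_abs]
      exact prod_bound h C hC0 hbdd (fun j i => X (F j i).1 ω)
    · simp only [if_neg hc]
      exact integrable_const 0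
  have hsplit : ∫ ω, Sfun h p m (fun i => X i ω) ∂ℙ
      = ∑ F : Fin q → Fin k → Fin m,
          ∫ ω, (if (∀ j, Function.Injective (F j)) ∧
              (Finset.image (fun z : Fin q × Fin k => F z.1 z.2) Finset.univ).card = p
            then ∏ j, h j (fun i => X (F j i).1 ω) else 0) ∂ℙ := by
    rw [show (fun ω => Sfun h p m (fun i => X i ω))
        = fun ω => ∑ F : Fin q → Fin k → Fin m,
            (if (∀ j, Function.Injective (F j)) ∧
                (Finset.image (fun z : Fin q × Fin k => F z.1 z.2) Finset.univ).card = p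
              then ∏ j, h j (fun i => X (F j i).1 ω) else 0) from rfl]
    exact integral_finset_sum _ fun F _ => hInt F
  rw [hsplit]
  have hiter : ∀ F : Fin q → Fin k → Fin m,
      ∫ ω, (if (∀ j, Function.Injective (F j)) ∧
          (Finset.image (fun z : Fin q × Fin k => F z.1 z.2) Finset.univ).card = p
        then ∏ j, h j (fun i => X (F j i).1 ω) else 0) ∂ℙ
      = if (∀ j, Function.Injective (F j)) ∧
          (Finset.image (fun z : Fin q × Fin k => F z.1 z.2) Finset.univ).card = p
        then ∫ ω, ∏ j, h j (fun i => X (F j i).1 ω) ∂ℙ else 0 := by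
    intro F
    by_cases hc : (∀ j, Function.Injective (F j)) ∧
        (Finset.image (fun z : Fin q × Fin k => F z.1 z.2) Finset.univ).card = p
    · simp only [if_pos hc]
    · simp only [if_neg hc, integral_zero]
  simp_rw [hiter]
  -- apply the combinatorial identity
  have hJ : ∀ (g : Fin p → Fin m) (σ : Fin q → Fin k → Fin p), Function.Injective g →
      (∫ ω, ∏ j, h j (fun i => X (((fun j i => g (σ j i)) j i).1) ω) ∂ℙ)
      = ∫ ω, ∏ j, h j (fun i => X ((σ j i).1) ω) ∂ℙ := by
    intro g σ hg
    have h1 := exchangeProd X h hmeas hXmeas hXindep hXident σ (fun t => (g t : ℕ))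
      (Fin.val_injective.comp hg)
    have h2 := exchangeProd X h hmeas hXmeas hXindep hXident σ (fun t : Fin p => (t : ℕ))
      Fin.val_injective
    exact h1.trans h2.symm
  have hcomb := comb (fun F => ∫ ω, ∏ j, h j (fun i => X ((F j i).1) ω) ∂ℙ)
    (fun σ => ∫ ω, ∏ j, h j (fun i => X ((σ j i).1) ω) ∂ℙ) hJ
  have hfacne : ((p.factorial : ℕ) : ℝ) ≠ 0 := Nat.cast_ne_zero.2 (Nat.factorial_ne_zero p)
  rw [div_mul_eq_mul_div, eq_div_iff hfacne]
  calc (∑ F : Fin q → Fin k → Fin m,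
        if (∀ j, Function.Injective (F j)) ∧
            (Finset.image (fun z : Fin q × Fin k => F z.1 z.2) Finset.univ).card = p
          then ∫ ω, ∏ j, h j (fun i => X (F j i).1 ω) ∂ℙ else 0) * (p.factorial : ℝ)
      = (p.factorial : ℝ) * ∑ F : Fin q → Fin k → Fin m,
        if (∀ j, Function.Injective (F j)) ∧
            (Finset.image (fun z : Fin q × Fin k => F z.1 z.2) Finset.univ).card = p
          then ∫ ω, ∏ j, h j (fun i => X (F j i).1 ω) ∂ℙ else 0 := by ring
    _ = (m.descFactorial p : ℝ) * ∑ σ : Fin q → Fin k → Fin p,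
          (if (∀ y, ∃ j i, σ j i = y) ∧ (∀ j, Function.Injective (σ j))
            then ∫ ω, ∏ j, h j (fun i => X ((σ j i).1) ω) ∂ℙ else 0) := hcomb


end AuxPalm


theorem stmt_10 {Ω : Type*} [MeasureSpace Ω] [IsProbabilityMeasure (ℙ : Measure Ω)]
    (d k q p : ℕ) (hk : 1 ≤ k) (hq : 2 ≤ q) (hpk : k ≤ p) (hpqk : p ≤ q * k) (n : NNReal)
    (X : ℕ → Ω → EuclideanSpace ℝ (Fin d)) (N : Ω → ℕ)
    (hXmeas : ∀ i, Measurable (X i)) (hNmeas : Measurable N)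
    -- the `Xᵢ` are i.i.d.
    (hXindep : iIndepFun X ℙ)
    (hXident : ∀ i, Measure.map (X i) ℙ = Measure.map (X 0) ℙ)
    -- `N` is Poisson with mean `n`, independent of the sequence `(Xᵢ)`
    (hN : Measure.map N ℙ = poissonMeasure n)
    (hNindep : IndepFun N (fun ω => fun i => X i ω) ℙ)
    -- the `hⱼ` are bounded, measurable and vanish on diagonals
    (h : Fin q → (Fin k → EuclideanSpace ℝ (Fin d)) → ℝ)
    (hmeas : ∀ j, Measurable (h j)) (C : ℝ) (hbdd : ∀ j v, |h j v| ≤ C)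
    (hdiag : ∀ j, ∀ v : Fin k → EuclideanSpace ℝ (Fin d),
      (∃ i i', i ≠ i' ∧ v i = v i') → h j v = 0) :
    -- sum over `q`-tuples of ordered `k`-tuples of distinct points of `𝒫ₙ`,
    -- restricted to configurations using exactly `p` distinct points
    ∫ ω, (∑ F : Fin q → Fin k → Fin (N ω),
        if (∀ j, Function.Injective (F j)) ∧
            (Finset.image (fun x : Fin q × Fin k => F x.1 x.2) Finset.univ).card = p
        then ∏ j, h j (fun i => X (F j i).1 ω) else 0)
      = (n : ℝ) ^ p / (Nat.factorial p) *
          ∑ σ : Fin q → Fin k → Fin p,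
            if (∀ y, ∃ j i, σ j i = y) ∧ (∀ j, Function.Injective (σ j))
            then ∫ ω, ∏ j, h j (fun i => X (σ j i).1 ω) else 0 := by
  have hC0 : 0 ≤ C := (abs_nonneg _).trans (hbdd ⟨0, by omega⟩ (fun _ => 0))
  have hsum : Summable fun m : ℕ =>
      (((m ^ k) ^ q : ℕ) : ℝ) * C ^ q * poissonPMFReal n m := by
    have := poisson_summable n (C ^ q) (k * q)
    simpa [pow_mul] using this
  have hmain := stepA X N hXmeas hNmeas n hN hNindep (Sfun h p)
    (fun m => Sfun_measurable h hmeas p m)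
    (fun m => (((m ^ k) ^ q : ℕ) : ℝ) * C ^ q)
    (fun m => mul_nonneg (Nat.cast_nonneg _) (pow_nonneg hC0 q))
    (fun m x => Sfun_bound h C hC0 hbdd p m x) hsum
  have hLHS : (∫ ω, (∑ F : Fin q → Fin k → Fin (N ω),
      if (∀ j, Function.Injective (F j)) ∧
          (Finset.image (fun x : Fin q × Fin k => F x.1 x.2) Finset.univ).card = p
      then ∏ j, h j (fun i => X (F j i).1 ω) else 0))
      = ∫ ω, Sfun h p (N ω) (fun i => X i ω) ∂ℙ := rfl
  rw [hLHS, hmain]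
  have hperm := perM X hXmeas hXindep hXident h hmeas C hC0 hbdd p
  calc ∑' m : ℕ, poissonPMFReal n m * ∫ ω, Sfun h p m (fun i => X i ω) ∂ℙ
      = ∑' m : ℕ, (poissonPMFReal n m * (m.descFactorial p : ℝ)) *
          (((p.factorial : ℕ) : ℝ)⁻¹ *
            ∑ σ : Fin q → Fin k → Fin p,
              if (∀ y, ∃ j i, σ j i = y) ∧ (∀ j, Function.Injective (σ j))
              then ∫ ω, ∏ j, h j (fun i => X (σ j i).1 ω) ∂ℙ else 0) := by
        refine tsum_congr fun m => ?_
        rw [hperm m]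
        ring
    _ = (∑' m : ℕ, poissonPMFReal n m * (m.descFactorial p : ℝ)) *
          (((p.factorial : ℕ) : ℝ)⁻¹ *
            ∑ σ : Fin q → Fin k → Fin p,
              if (∀ y, ∃ j i, σ j i = y) ∧ (∀ j, Function.Injective (σ j))
              then ∫ ω, ∏ j, h j (fun i => X (σ j i).1 ω) ∂ℙ else 0) := tsum_mul_right
    _ = (n : ℝ) ^ p / (Nat.factorial p) *
          ∑ σ : Fin q → Fin k → Fin p,
            if (∀ y, ∃ j i, σ j i = y) ∧ (∀ j, Function.Injective (σ j))
            then ∫ ω, ∏ j, h j (fun i => X (σ j i).1 ω) else 0 := by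
        rw [poisson_moment n p]
        ring
end

section
/- Let $\zeta > 0$, $0 < \gamma < 1/2$, and consider points $y_1, y_2$ in the hyperbolic plane of curvature $-\zeta^2$ at distances $R - t_1$ and $R - t_2$ from the origin with $t_1, t_2 \leq \gamma R$, and with relative angle $\theta_{12}$. If $d(y_1, y_2) \leq R$, then $\theta_{12} \leq (1 + o(1))\, 2 e^{-\zeta(1-2\gamma)R/2}$ as $R \to \infty$, uniformly over all such pairs $(t_1, t_2)$. -/
open Real Filter

/-- Inverse hyperbolic cosine. -/
noncomputable def arcosh (x : ℝ) : ℝ := Real.log (x + Real.sqrt (x ^ 2 - 1))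

/-- Hyperbolic distance (curvature `-ζ²`) between two points at distances `r₁, r₂`
from the origin with relative angle `θ`, via the hyperbolic law of cosines. -/
noncomputable def distAngle (ζ r₁ r₂ θ : ℝ) : ℝ :=
  (1 / ζ) * _root_.arcosh (Real.cosh (ζ * r₁) * Real.cosh (ζ * r₂) -
    Real.sinh (ζ * r₁) * Real.sinh (ζ * r₂) * Real.cos θ)

lemma arcosh_nonneg' {x : ℝ} (hx : 1 ≤ x) : 0 ≤ _root_.arcosh x := by
  apply Real.log_nonneg
  have := Real.sqrt_nonneg (x ^ 2 - 1)
  linarith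

lemma cosh_arcosh' {x : ℝ} (hx : 1 ≤ x) : Real.cosh (_root_.arcosh x) = x := by
  have h1 : 0 ≤ x ^ 2 - 1 := by nlinarith
  have hs : Real.sqrt (x ^ 2 - 1) ^ 2 = x ^ 2 - 1 := Real.sq_sqrt h1
  have hsnn : 0 ≤ Real.sqrt (x ^ 2 - 1) := Real.sqrt_nonneg _
  have hy : 0 < x + Real.sqrt (x ^ 2 - 1) := by nlinarith
  rw [_root_.arcosh, Real.cosh_eq, Real.exp_neg, Real.exp_log hy]
  have hinv : (x + Real.sqrt (x ^ 2 - 1))⁻¹ = x - Real.sqrt (x ^ 2 - 1) := by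
    field_simp
    nlinarith
  rw [hinv]; ring

set_option maxHeartbeats 2000000 in
theorem stmt_15 (ζ γ : ℝ) (hζ : 0 < ζ) (hγ0 : 0 < γ) (hγ : γ < 1 / 2) :
    ∃ ε : ℝ → ℝ, Tendsto ε atTop (nhds 0) ∧
      ∀ R t₁ t₂ θ : ℝ, 0 ≤ t₁ → t₁ ≤ γ * R → 0 ≤ t₂ → t₂ ≤ γ * R →
        θ ∈ Set.Icc 0 Real.pi →
        distAngle ζ (R - t₁) (R - t₂) θ ≤ R →
        θ ≤ (1 + ε R) * 2 * Real.exp (-ζ * (1 - 2 * γ) * R / 2) := by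
  classical
  have hc : 0 < ζ * (1 - 2 * γ) := by nlinarith
  have hc2 : 0 < 2 * ζ * (1 - γ) := by nlinarith
  have hc3 : 0 < 2 * ζ := by nlinarith
  refine ⟨fun R =>
    if Real.exp (-(ζ * (1 - 2 * γ) * R)) ≤ 1 / (8 * π ^ 2) ∧
        Real.exp (-(2 * ζ * (1 - γ) * R)) ≤ 1 / 2 then
      (1 + Real.exp (-(2 * ζ * R))) /
        ((1 - π ^ 2 / 2 * Real.exp (-(ζ * (1 - 2 * γ) * R))) ^ 2 *
          (1 - Real.exp (-(2 * ζ * (1 - γ) * R))) ^ 2) - 1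
    else π * Real.exp (ζ * (1 - 2 * γ) * R / 2) / 2, ?_, ?_⟩
  · -- Tendsto
    have t1 : Tendsto (fun R : ℝ => Real.exp (-(ζ * (1 - 2 * γ) * R))) atTop (nhds 0) := by
      exact Real.tendsto_exp_neg_atTop_nhds_zero.comp (Tendsto.const_mul_atTop hc tendsto_id)
    have t2 : Tendsto (fun R : ℝ => Real.exp (-(2 * ζ * (1 - γ) * R))) atTop (nhds 0) := by
      exact Real.tendsto_exp_neg_atTop_nhds_zero.comp (Tendsto.const_mul_atTop hc2 tendsto_id)
    have t3 : Tendsto (fun R : ℝ => Real.exp (-(2 * ζ * R))) atTop (nhds 0) := by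
      exact Real.tendsto_exp_neg_atTop_nhds_zero.comp (Tendsto.const_mul_atTop hc3 tendsto_id)
    have htail : Tendsto (fun R : ℝ =>
        (1 + Real.exp (-(2 * ζ * R))) /
          ((1 - π ^ 2 / 2 * Real.exp (-(ζ * (1 - 2 * γ) * R))) ^ 2 *
            (1 - Real.exp (-(2 * ζ * (1 - γ) * R))) ^ 2) - 1) atTop (nhds 0) := by
      have h := ((tendsto_const_nhds (x := (1:ℝ)) (f := atTop)).add t3).div
        ((((tendsto_const_nhds (x := (1:ℝ)) (f := atTop)).sub (t1.const_mul (π ^ 2 / 2))).pow 2).mul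
          (((tendsto_const_nhds (x := (1:ℝ)) (f := atTop)).sub t2).pow 2)) (by norm_num)
      have h2 := h.sub (tendsto_const_nhds (x := (1:ℝ)) (f := atTop))
      norm_num at h2
      exact h2
    have hev : ∀ᶠ R in atTop, Real.exp (-(ζ * (1 - 2 * γ) * R)) ≤ 1 / (8 * π ^ 2) ∧
        Real.exp (-(2 * ζ * (1 - γ) * R)) ≤ 1 / 2 :=
      (t1.eventually (eventually_le_nhds (by positivity))).and
        (t2.eventually (eventually_le_nhds (by norm_num)))
    exact htail.congr' (hev.mono fun R hR => (if_pos hR).symm)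
  · intro R t₁ t₂ θ ht10 ht1 ht20 ht2 hθmem hdist
    obtain ⟨hθ0, hθπ⟩ := hθmem
    have hR : 0 ≤ R := by nlinarith
    -- notation
    set a := ζ * (R - t₁) with ha
    set b := ζ * (R - t₂) with hb
    set m := ζ * (1 - γ) * R with hm
    have hma : m ≤ a := by rw [ha, hm]; nlinarith
    have hmb : m ≤ b := by rw [hb, hm]; nlinarith
    have hm0 : 0 ≤ m := by rw [hm]; nlinarith
    have hsm0 : 0 ≤ Real.sinh m := Real.sinh_nonneg_iff.2 hm0
    have hsa : Real.sinh m ≤ Real.sinh a := Real.sinh_le_sinh.2 hma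
    have hsb : Real.sinh m ≤ Real.sinh b := Real.sinh_le_sinh.2 hmb
    have hSnn : 0 ≤ Real.sinh a * Real.sinh b :=
      mul_nonneg (le_trans hsm0 hsa) (le_trans hsm0 hsb)
    have hcos1 : Real.cos θ ≤ 1 := Real.cos_le_one θ
    have hP0 : 0 ≤ 1 - Real.cos θ := by linarith
    set X := Real.cosh a * Real.cosh b - Real.sinh a * Real.sinh b * Real.cos θ with hX
    have hXc : X = Real.cosh (a - b) + Real.sinh a * Real.sinh b * (1 - Real.cos θ) := by
      rw [hX, Real.cosh_sub]; ring
    have hX1 : 1 ≤ X := by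
      rw [hXc]
      have := Real.one_le_cosh (a - b)
      nlinarith
    -- from the distance hypothesis
    have hA : _root_.arcosh X ≤ ζ * R := by
      rw [distAngle] at hdist
      rw [one_div, inv_mul_eq_div, div_le_iff₀ hζ] at hdist
      calc _root_.arcosh X ≤ R * ζ := hdist
        _ = ζ * R := by ring
    have hXcosh : X ≤ Real.cosh (ζ * R) := by
      calc X = Real.cosh (_root_.arcosh X) := (cosh_arcosh' hX1).symm
        _ ≤ Real.cosh (ζ * R) := by
            rw [Real.cosh_le_cosh, abs_of_nonneg (arcosh_nonneg' hX1),
              abs_of_nonneg (by positivity : (0:ℝ) ≤ ζ * R)]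
            exact hA
    have hkey : Real.sinh a * Real.sinh b * (1 - Real.cos θ) ≤ Real.cosh (ζ * R) - 1 := by
      have h1 := Real.one_le_cosh (a - b)
      rw [hXc] at hXcosh
      linarith
    have hSm2 : Real.sinh m ^ 2 ≤ Real.sinh a * Real.sinh b := by
      rw [sq]; exact mul_le_mul hsa hsb hsm0 (le_trans hsm0 hsa)
    have hS : Real.sinh m ^ 2 * (1 - Real.cos θ) ≤ Real.cosh (ζ * R) := by
      have h1 := mul_le_mul_of_nonneg_right hSm2 hP0
      have h2 := Real.one_le_cosh (ζ * R)
      linarith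
    -- exponential forms
    set E := Real.exp (ζ * (1 - γ) * R) with hEdef
    set d := Real.exp (-(2 * ζ * (1 - γ) * R)) with hddef
    set e := Real.exp (-(2 * ζ * R)) with hedef
    set w := Real.exp (-(ζ * (1 - 2 * γ) * R)) with hwdef
    set s := Real.exp (-ζ * (1 - 2 * γ) * R / 2) with hsdef
    have hE0 : 0 < E := Real.exp_pos _
    have hd0 : 0 < d := Real.exp_pos _
    have he0 : 0 < e := Real.exp_pos _
    have hw0 : 0 < w := Real.exp_pos _
    have hs0 : 0 < s := Real.exp_pos _
    have hEd : E * d = Real.exp (-(ζ * (1 - γ) * R)) := by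
      rw [hEdef, hddef, ← Real.exp_add]; congr 1; ring
    have hsinhm : Real.sinh m = E * (1 - d) / 2 := by
      rw [hm, Real.sinh_eq, ← hEd, ← hEdef]; ring
    have hEe : Real.exp (ζ * R) * e = Real.exp (-(ζ * R)) := by
      rw [hedef, ← Real.exp_add]; congr 1; ring
    have hcoshR : Real.cosh (ζ * R) = Real.exp (ζ * R) * (1 + e) / 2 := by
      rw [Real.cosh_eq, ← hEe]; ring
    have hE2w : E ^ 2 * w = Real.exp (ζ * R) := by
      rw [hEdef, hwdef, sq, ← Real.exp_add, ← Real.exp_add]; congr 1; ring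
    have hs2 : s ^ 2 = w := by
      rw [hsdef, hwdef, sq, ← Real.exp_add]; congr 1; ring
    have hd1 : d ≤ 1 := by
      rw [hddef]
      exact Real.exp_le_one_iff.2 (neg_nonpos.2 (mul_nonneg hc2.le hR))
    have he1 : e ≤ 1 := by
      rw [hedef]
      exact Real.exp_le_one_iff.2 (neg_nonpos.2 (mul_nonneg hc3.le hR))
    -- main inequality divided by E^2
    have hMain : (1 - d) ^ 2 * (1 - Real.cos θ) ≤ 2 * w * (1 + e) := by
      rw [hsinhm, hcoshR, ← hE2w] at hS
      have hE2 : (0:ℝ) < E ^ 2 := by positivity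
      have h1 : E ^ 2 * ((1 - d) ^ 2 * (1 - Real.cos θ) / 4) ≤
          E ^ 2 * (w * (1 + e) / 2) := by
        calc E ^ 2 * ((1 - d) ^ 2 * (1 - Real.cos θ) / 4)
            = (E * (1 - d) / 2) ^ 2 * (1 - Real.cos θ) := by ring
          _ ≤ E ^ 2 * w * (1 + e) / 2 := hS
          _ = E ^ 2 * (w * (1 + e) / 2) := by ring
      have h2 := (mul_le_mul_iff_right₀ hE2).1 h1
      linarith
    -- the half-angle formula
    have hPsin : 1 - Real.cos θ = 2 * Real.sin (θ / 2) ^ 2 := by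
      have h1 := Real.cos_two_mul' (θ / 2)
      have h2 := Real.sin_sq_add_cos_sq (θ / 2)
      have h3 : 2 * (θ / 2) = θ := by ring
      rw [h3] at h1
      linarith
    -- beta reduce the epsilon function and name the pieces
    beta_reduce
    split_ifs with hcond
    · obtain ⟨hw8, hd2⟩ := hcond
      have hπ := Real.pi_pos
      -- crude bound
      have hsin : θ / π ≤ Real.sin (θ / 2) := by
        have h := Real.mul_le_sin (x := θ / 2) (by linarith) (by linarith)
        calc θ / π = 2 / π * (θ / 2) := by ring
          _ ≤ Real.sin (θ / 2) := h
      have hsinnn : 0 ≤ θ / π := by positivity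
      have hs2' : (θ / π) ^ 2 ≤ Real.sin (θ / 2) ^ 2 := pow_le_pow_left₀ hsinnn hsin 2
      have hPlow : 2 * θ ^ 2 ≤ π ^ 2 * (1 - Real.cos θ) := by
        rw [hPsin]
        have h3 := mul_le_mul_of_nonneg_left hs2' (by positivity : (0:ℝ) ≤ π ^ 2)
        have hid : π ^ 2 * (θ / π) ^ 2 = θ ^ 2 := by field_simp
        rw [hid] at h3
        linarith
      have hq1 : (1:ℝ) / 4 ≤ (1 - d) ^ 2 := by
        have := pow_le_pow_left₀ (by norm_num : (0:ℝ) ≤ 1/2) (by linarith : (1:ℝ)/2 ≤ 1 - d) 2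
        norm_num at this
        linarith
      have hcrude : θ ^ 2 ≤ 8 * π ^ 2 * w := by
        have hM2 := mul_le_mul_of_nonneg_left hMain (sq_nonneg π)
        have hLo := mul_le_mul hq1 hPlow (by positivity) (sq_nonneg (1 - d))
        have hwe : w * e ≤ w * 1 := mul_le_mul_of_nonneg_left he1 hw0.le
        have hUp : π ^ 2 * (2 * w * (1 + e)) ≤ π ^ 2 * (4 * w) :=
          mul_le_mul_of_nonneg_left (by linarith [hwe, hw0.le]) (sq_nonneg π)
        linarith [hM2, hLo, hUp]
      have h8w : 8 * π ^ 2 * w ≤ 1 := by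
        have h := mul_le_mul_of_nonneg_left hw8 (by positivity : (0:ℝ) ≤ 8 * π ^ 2)
        have hid : 8 * π ^ 2 * (1 / (8 * π ^ 2)) = 1 := by field_simp
        rw [hid] at h
        exact h
      have hθ2le1 : θ ^ 2 ≤ 1 := le_trans hcrude h8w
      have hθle1 : θ ≤ 1 := by linarith [sq_nonneg (θ - 1), hθ2le1]
      have hQb : θ ^ 2 / 16 ≤ π ^ 2 / 2 * w := by linarith
      have hQ16 : π ^ 2 / 2 * w ≤ 1 / 16 := by
        have h := mul_le_mul_of_nonneg_left hw8 (by positivity : (0:ℝ) ≤ π ^ 2 / 2)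
        have hid : π ^ 2 / 2 * (1 / (8 * π ^ 2)) = 1 / 16 := by
          field_simp; ring
        rw [hid] at h
        exact h
      have hD0 : (0:ℝ) < (1 - π ^ 2 / 2 * w) ^ 2 * (1 - d) ^ 2 :=
        mul_pos (pow_pos (by linarith) 2) (pow_pos (by linarith) 2)
      have hrw : (1 + ((1 + e) / ((1 - π ^ 2 / 2 * w) ^ 2 * (1 - d) ^ 2) - 1)) * 2 * s
          = (1 + e) / ((1 - π ^ 2 / 2 * w) ^ 2 * (1 - d) ^ 2) * 2 * s := by ring
      rw [hrw]
      rcases eq_or_lt_of_le hθ0 with h0 | hθpos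
      · rw [← h0]
        positivity
      · have hhalf1 : θ / 2 ≤ 1 := by linarith
        have hcube := Real.sin_gt_sub_cube (by linarith : 0 < θ / 2)
        have hlow1 : θ / 2 * (1 - π ^ 2 / 2 * w) ≤ θ / 2 * (1 - θ ^ 2 / 16) :=
          mul_le_mul_of_nonneg_left (by linarith) (by linarith)
        have hlow2 : θ / 2 * (1 - θ ^ 2 / 16) ≤ Real.sin (θ / 2) := by
          calc θ / 2 * (1 - θ ^ 2 / 16) = θ / 2 - (θ / 2) ^ 3 / 4 := by ring
            _ ≤ Real.sin (θ / 2) := by linarith [hcube, pow_pos (by linarith : (0:ℝ) < θ / 2) 3]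
        have hssnn : 0 ≤ θ / 2 * (1 - π ^ 2 / 2 * w) :=
          mul_nonneg (by linarith) (by linarith)
        have hsq := pow_le_pow_left₀ hssnn (le_trans hlow1 hlow2) 2
        have hPsharp : θ ^ 2 / 2 * (1 - π ^ 2 / 2 * w) ^ 2 ≤ 1 - Real.cos θ := by
          rw [hPsin]
          calc θ ^ 2 / 2 * (1 - π ^ 2 / 2 * w) ^ 2
              = 2 * (θ / 2 * (1 - π ^ 2 / 2 * w)) ^ 2 := by ring
            _ ≤ 2 * Real.sin (θ / 2) ^ 2 := by linarith
        have hcomb : θ ^ 2 / 2 * (1 - π ^ 2 / 2 * w) ^ 2 * (1 - d) ^ 2 ≤ 2 * w * (1 + e) := by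
          have h1 := mul_le_mul_of_nonneg_left hPsharp (sq_nonneg (1 - d))
          calc θ ^ 2 / 2 * (1 - π ^ 2 / 2 * w) ^ 2 * (1 - d) ^ 2
              = (1 - d) ^ 2 * (θ ^ 2 / 2 * (1 - π ^ 2 / 2 * w) ^ 2) := by ring
            _ ≤ (1 - d) ^ 2 * (1 - Real.cos θ) := h1
            _ ≤ 2 * w * (1 + e) := hMain
        have hD1 : (1 - π ^ 2 / 2 * w) ^ 2 * (1 - d) ^ 2 ≤ 1 := by
          have hQw0 : 0 ≤ π ^ 2 / 2 * w := by positivity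
          have e1 : (1 - π ^ 2 / 2 * w) ^ 2 ≤ 1 := by
            rw [sq]
            exact mul_le_one₀ (by linarith) (by linarith) (by linarith)
          have e2 : (1 - d) ^ 2 ≤ 1 := by
            rw [sq]
            exact mul_le_one₀ (by linarith) (by linarith) (by linarith)
          exact mul_le_one₀ e1 (sq_nonneg _) e2
        have hX1' : 1 ≤ (1 + e) / ((1 - π ^ 2 / 2 * w) ^ 2 * (1 - d) ^ 2) := by
          rw [le_div_iff₀ hD0]
          linarith [he0.le]
        have hXD : (1 + e) / ((1 - π ^ 2 / 2 * w) ^ 2 * (1 - d) ^ 2) *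
            ((1 - π ^ 2 / 2 * w) ^ 2 * (1 - d) ^ 2) = 1 + e :=
          div_mul_cancel₀ _ hD0.ne'
        have hθsqX : θ ^ 2 ≤ 4 * w * ((1 + e) / ((1 - π ^ 2 / 2 * w) ^ 2 * (1 - d) ^ 2)) := by
          refine le_of_mul_le_mul_right ?_ hD0
          calc θ ^ 2 * ((1 - π ^ 2 / 2 * w) ^ 2 * (1 - d) ^ 2)
              = 2 * (θ ^ 2 / 2 * (1 - π ^ 2 / 2 * w) ^ 2 * (1 - d) ^ 2) := by ring
            _ ≤ 2 * (2 * w * (1 + e)) := by linarith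
            _ = 4 * w * (1 + e) := by ring
            _ = 4 * w * ((1 + e) / ((1 - π ^ 2 / 2 * w) ^ 2 * (1 - d) ^ 2) *
                ((1 - π ^ 2 / 2 * w) ^ 2 * (1 - d) ^ 2)) := by rw [hXD]
            _ = 4 * w * ((1 + e) / ((1 - π ^ 2 / 2 * w) ^ 2 * (1 - d) ^ 2)) *
                ((1 - π ^ 2 / 2 * w) ^ 2 * (1 - d) ^ 2) := by ring
        have hRHSnn : 0 ≤ (1 + e) / ((1 - π ^ 2 / 2 * w) ^ 2 * (1 - d) ^ 2) * 2 * s := by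
          positivity
        have hfin : θ ^ 2 ≤ ((1 + e) / ((1 - π ^ 2 / 2 * w) ^ 2 * (1 - d) ^ 2) * 2 * s) ^ 2 := by
          have hexp : ((1 + e) / ((1 - π ^ 2 / 2 * w) ^ 2 * (1 - d) ^ 2) * 2 * s) ^ 2
              = ((1 + e) / ((1 - π ^ 2 / 2 * w) ^ 2 * (1 - d) ^ 2)) ^ 2 * 4 * w := by
            rw [← hs2]; ring
          rw [hexp]
          have hstep := mul_le_mul_of_nonneg_left hX1'
            (by positivity : (0:ℝ) ≤ 4 * w * ((1 + e) / ((1 - π ^ 2 / 2 * w) ^ 2 * (1 - d) ^ 2)))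
          linarith [hθsqX, hstep]
        have hsqrt := Real.sqrt_le_sqrt hfin
        rwa [Real.sqrt_sq hθ0, Real.sqrt_sq hRHSnn] at hsqrt
    · -- bad region: trivial bound via θ ≤ π
      have hes : Real.exp (ζ * (1 - 2 * γ) * R / 2) * s = 1 := by
        rw [hsdef, ← Real.exp_add,
          show ζ * (1 - 2 * γ) * R / 2 + -ζ * (1 - 2 * γ) * R / 2 = 0 from by ring,
          Real.exp_zero]
      have hπs : π * (Real.exp (ζ * (1 - 2 * γ) * R / 2) * s) = π := by
        rw [hes, mul_one]
      linarith [hθπ, hs0.le, hπs]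
end

section
/- Let $d_1 \geq d_2 \geq 1$ be integers, $\zeta > 0$, $d \geq 2$, $\alpha > 0$ with $2\alpha/\zeta \neq d_2 - 1$, and $1/2 < \gamma < 1$. Define $D_R = e^{\zeta(d-1)R/2} \int_{(1-\gamma)R - \omega_R}^{\gamma R} e^{\zeta(d-1)(d_1 - 1 - 2\alpha/\zeta)t_1/2} \int_{R - t_1 - \omega_R}^{\gamma R} e^{\zeta(d-1)(d_2 - 1 - 2\alpha/\zeta)t_2/2}\, dt_2\, dt_1$ where $\omega_R = \log\log R$, and $a_R(p) = \int_0^{\gamma R} e^{\zeta(d-1)(p-2\alpha/\zeta)t/2}\,dt$. Then $D_R = o\big(a_R(d_1)\, a_R(d_2)\big)$ as $R \to \infty$. -/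
open Real Filter Asymptotics

/-- The exponential integral `a_R(p)`. -/
noncomputable def aInt (ζ α γ : ℝ) (d : ℕ) (R : ℝ) (p : ℕ) : ℝ :=
  ∫ t in (0:ℝ)..(γ * R), Real.exp (ζ * (d - 1) * ((p : ℝ) - 2 * α / ζ) * t / 2)

/-- The boundary-correction double integral `D_R`. -/
noncomputable def Dint (ζ α γ : ℝ) (d d₁ d₂ : ℕ) (R : ℝ) : ℝ :=
  Real.exp (ζ * (d - 1) * R / 2) *
    ∫ t₁ in ((1 - γ) * R - Real.log (Real.log R))..(γ * R),
      Real.exp (ζ * (d - 1) * ((d₁ : ℝ) - 1 - 2 * α / ζ) * t₁ / 2) *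
        ∫ t₂ in (R - t₁ - Real.log (Real.log R))..(γ * R),
          Real.exp (ζ * (d - 1) * ((d₂ : ℝ) - 1 - 2 * α / ζ) * t₂ / 2)

lemma exp_int (k : ℝ) (hk : k ≠ 0) (a b : ℝ) :
    ∫ t in a..b, Real.exp (k * t) = (Real.exp (k * b) - Real.exp (k * a)) / k := by
  have h : ∀ t ∈ Set.uIcc a b, HasDerivAt (fun x => Real.exp (k * x) / k) (Real.exp (k * t)) t := by
    intro t _
    have h1 : HasDerivAt (fun x : ℝ => k * x) k t := by
      simpa using (hasDerivAt_id t).const_mul k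
    have h3 := h1.exp.div_const k
    simpa [mul_div_cancel_right₀ _ hk] using h3
  rw [intervalIntegral.integral_eq_sub_of_hasDerivAt h
    ((Real.continuous_exp.comp (continuous_const.mul continuous_id)).intervalIntegrable a b)]
  ring

lemma tend_exp (a m b : ℝ) (h : a < 0 ∨ (a = 0 ∧ m < 0)) :
    Tendsto (fun R : ℝ => Real.exp (a * R + m * Real.log R + b * Real.log (Real.log R)))
      atTop (nhds 0) := by
  apply Real.tendsto_exp_atBot.comp
  rcases h with ha | ⟨ha, hm⟩
  · have h2 : Tendsto (fun R : ℝ => (a / 2) * R) atTop atBot :=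
      (tendsto_const_mul_atBot_of_neg (by linarith)).2 tendsto_id
    apply tendsto_atBot_mono' atTop _ h2
    have hlog := Real.isLittleO_log_id_atTop.def (c := (-a/2) / (|m| + |b| + 1))
      (div_pos (by linarith) (by positivity))
    filter_upwards [hlog, eventually_ge_atTop (Real.exp 1)] with R hR hR3
    have hRpos : (0:ℝ) < R := lt_of_lt_of_le (Real.exp_pos 1) hR3
    have hR1 : (1:ℝ) ≤ Real.log R := by
      rw [Real.le_log_iff_exp_le hRpos]; simpa using hR3
    have hll0 : 0 ≤ Real.log (Real.log R) := Real.log_nonneg hR1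
    have hll : Real.log (Real.log R) ≤ Real.log R := Real.log_le_self (by linarith)
    simp only [Real.norm_eq_abs, id] at hR
    rw [abs_of_nonneg (by linarith : (0:ℝ) ≤ Real.log R), abs_of_pos hRpos] at hR
    have h1 : m * Real.log R ≤ |m| * Real.log R := by
      apply mul_le_mul_of_nonneg_right (le_abs_self m) (by linarith)
    have h2' : b * Real.log (Real.log R) ≤ |b| * Real.log R := by
      calc b * Real.log (Real.log R) ≤ |b| * Real.log (Real.log R) := by
            apply mul_le_mul_of_nonneg_right (le_abs_self b) hll0
        _ ≤ |b| * Real.log R := by apply mul_le_mul_of_nonneg_left hll (abs_nonneg b)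
    have hmul : (|m| + |b|) * Real.log R ≤ (|m| + |b|) * ((-a/2) / (|m| + |b| + 1) * R) :=
      mul_le_mul_of_nonneg_left hR (by positivity)
    have hc2 : (-a/2) / (|m| + |b| + 1) * (|m| + |b| + 1) * R = (-a/2) * R := by
      field_simp
    have hcr : 1 ≤ (-a/2) / (|m| + |b| + 1) * R := le_trans hR1 hR
    show a * R + m * Real.log R + b * Real.log (Real.log R) ≤ a / 2 * R
    nlinarith [h1, h2', hmul, hc2, hcr]
  · subst ha
    have h2 : Tendsto (fun R : ℝ => (m / 2) * Real.log R) atTop atBot :=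
      ((tendsto_const_mul_atBot_of_neg (by linarith)).2 tendsto_id).comp Real.tendsto_log_atTop
    apply tendsto_atBot_mono' atTop _ h2
    have hlog : (fun R : ℝ => Real.log (Real.log R)) =o[atTop] fun R => Real.log R :=
      Real.isLittleO_log_id_atTop.comp_tendsto Real.tendsto_log_atTop
    have hlog2 := hlog.def (c := (-m/2) / (|b| + 1)) (div_pos (by linarith) (by positivity))
    filter_upwards [hlog2, eventually_ge_atTop (Real.exp 1)] with R hR hR3
    have hRpos : (0:ℝ) < R := lt_of_lt_of_le (Real.exp_pos 1) hR3
    have hR1 : (1:ℝ) ≤ Real.log R := by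
      rw [Real.le_log_iff_exp_le hRpos]; simpa using hR3
    have hll0 : 0 ≤ Real.log (Real.log R) := Real.log_nonneg hR1
    simp only [Real.norm_eq_abs] at hR
    rw [abs_of_nonneg hll0, abs_of_nonneg (by linarith : (0:ℝ) ≤ Real.log R)] at hR
    have h2' : b * Real.log (Real.log R) ≤ |b| * ((-m/2) / (|b| + 1) * Real.log R) := by
      calc b * Real.log (Real.log R) ≤ |b| * Real.log (Real.log R) := by
            apply mul_le_mul_of_nonneg_right (le_abs_self b) hll0
        _ ≤ _ := by apply mul_le_mul_of_nonneg_left hR (abs_nonneg b)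
    have hc2 : (-m/2) / (|b| + 1) * (|b| + 1) * Real.log R = (-m/2) * Real.log R := by
      field_simp
    have hpos : 0 ≤ (-m/2) / (|b| + 1) * Real.log R := by
      apply mul_nonneg (le_of_lt (div_pos (by linarith) (by positivity))) (by linarith)
    show 0 * R + m * Real.log R + b * Real.log (Real.log R) ≤ m / 2 * Real.log R
    nlinarith [h2', hc2, hpos]

lemma mechanism (f g : ℝ → ℝ) (C a m b : ℝ)
    (h : a < 0 ∨ (a = 0 ∧ m < 0))
    (hev : ∀ᶠ R in atTop, 0 ≤ f R ∧ 0 < g R ∧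
      f R ≤ C * Real.exp (a * R + m * Real.log R + b * Real.log (Real.log R)) * g R) :
    f =o[atTop] g := by
  rw [isLittleO_iff]
  intro ε hε
  have htend : Tendsto (fun R : ℝ => C * Real.exp (a * R + m * Real.log R +
      b * Real.log (Real.log R))) atTop (nhds 0) := by
    simpa using (tend_exp a m b h).const_mul C
  have hev2 := htend.eventually (eventually_le_nhds hε)
  filter_upwards [hev, hev2] with R hR hC
  obtain ⟨hf0, hg0, hfg⟩ := hR
  rw [Real.norm_eq_abs, Real.norm_eq_abs, abs_of_nonneg hf0, abs_of_pos hg0]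
  calc f R ≤ C * Real.exp (a * R + m * Real.log R + b * Real.log (Real.log R)) * g R := hfg
    _ ≤ ε * g R := by apply mul_le_mul_of_nonneg_right hC (le_of_lt hg0)

lemma Alow (k : ℝ) :
    ∀ᶠ T in atTop, Real.exp (max k 0 * T) / (2 * (|k| + 1)) ≤
      ∫ t in (0:ℝ)..T, Real.exp (k * t) := by
  rcases lt_trichotomy k 0 with hk | hk | hk
  · filter_upwards [eventually_ge_atTop (Real.log (1/2) / k)] with T hT
    rw [exp_int k hk.ne]
    have h1 : Real.exp (k * T) ≤ 1/2 := by
      rw [show (1/2 : ℝ) = Real.exp (Real.log (1/2)) from (Real.exp_log (by norm_num)).symm]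
      apply Real.exp_le_exp.2
      rw [div_le_iff_of_neg hk] at hT
      linarith
    rw [max_eq_right hk.le, zero_mul, Real.exp_zero, abs_of_neg hk]
    have hden : (0:ℝ) < -k := by linarith
    rw [show (Real.exp (k * T) - Real.exp (k * 0)) / k = (1 - Real.exp (k * T)) / (-k) by
      rw [mul_zero, Real.exp_zero]; ring]
    rw [div_le_div_iff₀ (by positivity) hden]
    nlinarith [Real.exp_pos (k * T)]
  · subst hk
    filter_upwards [eventually_ge_atTop (1:ℝ)] with T hT
    simp only [zero_mul, max_self, Real.exp_zero, abs_zero, zero_add, mul_one,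
      intervalIntegral.integral_const, smul_eq_mul, sub_zero]
    linarith
  · filter_upwards [eventually_ge_atTop (Real.log 2 / k)] with T hT
    rw [exp_int k hk.ne']
    have h2 : (2:ℝ) ≤ Real.exp (k * T) := by
      rw [show (2:ℝ) = Real.exp (Real.log 2) from (Real.exp_log (by norm_num)).symm]
      apply Real.exp_le_exp.2
      rw [div_le_iff₀ hk] at hT
      linarith
    rw [max_eq_left hk.le, abs_of_pos hk, mul_zero, Real.exp_zero]
    rw [div_le_div_iff₀ (by positivity) hk]
    nlinarith [Real.exp_pos (k*T)]

lemma sub_div_le (x y k : ℝ) (hk : 0 < k) (hy : 0 ≤ y) : (x - y)/k ≤ x/k := by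
  rw [div_le_div_iff₀ hk hk]
  nlinarith

lemma exp_pair (x y z w cden : ℝ) (h : x + y = z + w) :
    Real.exp x * (Real.exp y / cden) = Real.exp z / cden * Real.exp w := by
  rw [mul_div_assoc', div_mul_eq_mul_div, ← Real.exp_add, ← Real.exp_add, h]

lemma exp_split_neg_log {R : ℝ} (hR : 0 < R) (X : ℝ) :
    Real.exp (X + (-1) * Real.log R) = Real.exp X / R := by
  rw [Real.exp_add, neg_one_mul, Real.exp_neg, Real.exp_log hR, div_eq_mul_inv]

lemma exp_split_log {R : ℝ} (hR : 0 < R) (X : ℝ) :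
    Real.exp (X + 1 * Real.log R) = Real.exp X * R := by
  rw [Real.exp_add, one_mul, Real.exp_log hR]

lemma exp_combine (C c₁ c₂ X Y₁ Y₂ : ℝ) :
    C * Real.exp X * (Real.exp Y₁ / c₁ * (Real.exp Y₂ / c₂)) =
      C / (c₁ * c₂) * Real.exp (X + Y₁ + Y₂) := by
  rw [Real.exp_add, Real.exp_add]; ring

set_option maxHeartbeats 4000000 in
theorem stmt_17 (ζ α γ : ℝ) (d d₁ d₂ : ℕ) (hζ : 0 < ζ) (hα : 0 < α) (hd : 2 ≤ d)
    (hd₂ : 1 ≤ d₂) (hd₁₂ : d₂ ≤ d₁) (hne : 2 * α / ζ ≠ (d₂ : ℝ) - 1)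
    (hγ : 1 / 2 < γ) (hγ1 : γ < 1) :
    (fun R => Dint ζ α γ d d₁ d₂ R) =o[atTop]
      (fun R => aInt ζ α γ d R d₁ * aInt ζ α γ d R d₂) := by
  have hγ0 : (0:ℝ) < γ := by linarith
  have hd' : (1:ℝ) ≤ (d:ℝ) - 1 := by
    have : (2:ℝ) ≤ (d:ℝ) := by exact_mod_cast hd
    linarith
  have hd12 : (d₂:ℝ) ≤ (d₁:ℝ) := by exact_mod_cast hd₁₂
  obtain ⟨c, hcdef⟩ : ∃ x : ℝ, x = ζ * ((d:ℝ) - 1) / 2 := ⟨_, rfl⟩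
  have hc : 0 < c := by rw [hcdef]; exact div_pos (mul_pos hζ (by linarith)) two_pos
  obtain ⟨k₁, hk₁def⟩ : ∃ x : ℝ, x = ζ * ((d:ℝ) - 1) * ((d₁:ℝ) - 1 - 2 * α / ζ) / 2 := ⟨_, rfl⟩
  obtain ⟨k₂, hk₂def⟩ : ∃ x : ℝ, x = ζ * ((d:ℝ) - 1) * ((d₂:ℝ) - 1 - 2 * α / ζ) / 2 := ⟨_, rfl⟩
  obtain ⟨s₁, hs₁def⟩ : ∃ x : ℝ, x = ζ * ((d:ℝ) - 1) * ((d₁:ℝ) - 2 * α / ζ) / 2 := ⟨_, rfl⟩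
  obtain ⟨s₂, hs₂def⟩ : ∃ x : ℝ, x = ζ * ((d:ℝ) - 1) * ((d₂:ℝ) - 2 * α / ζ) / 2 := ⟨_, rfl⟩
  have hs₁ : s₁ = k₁ + c := by rw [hs₁def, hk₁def, hcdef]; ring
  have hs₂ : s₂ = k₂ + c := by rw [hs₂def, hk₂def, hcdef]; ring
  have hκeq : k₁ - k₂ = s₁ - s₂ := by rw [hs₁, hs₂]; ring
  have hκnn : 0 ≤ k₁ - k₂ := by
    rw [hk₁def, hk₂def]
    have h0 : (0:ℝ) ≤ (d₁:ℝ) - (d₂:ℝ) := by linarith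
    have := mul_nonneg (mul_nonneg hζ.le (by linarith : (0:ℝ) ≤ (d:ℝ) - 1)) h0
    nlinarith
  have hk₂ne : k₂ ≠ 0 := by
    rw [hk₂def]
    intro h
    apply hne
    have hz : ζ * ((d:ℝ) - 1) ≠ 0 := by positivity
    have : (d₂:ℝ) - 1 - 2 * α / ζ = 0 := by
      by_contra hcon
      exact (mul_ne_zero hz hcon) (by linarith [h] ; )
    linarith
  have haInt1 : ∀ R : ℝ, aInt ζ α γ d R d₁ = ∫ t in (0:ℝ)..(γ*R), Real.exp (s₁ * t) := by
    intro R
    unfold aInt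
    rw [show (fun t => Real.exp (ζ*((d:ℝ)-1)*((d₁:ℝ)-2*α/ζ)*t/2)) = fun t => Real.exp (s₁*t)
      from funext fun t => by rw [hs₁def]; ring_nf]
  have haInt2 : ∀ R : ℝ, aInt ζ α γ d R d₂ = ∫ t in (0:ℝ)..(γ*R), Real.exp (s₂ * t) := by
    intro R
    unfold aInt
    rw [show (fun t => Real.exp (ζ*((d:ℝ)-1)*((d₂:ℝ)-2*α/ζ)*t/2)) = fun t => Real.exp (s₂*t)
      from funext fun t => by rw [hs₂def]; ring_nf]
  have hDeq : ∀ R : ℝ, Dint ζ α γ d d₁ d₂ R =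
      Real.exp (c*R) * ∫ t₁ in ((1-γ)*R - Real.log (Real.log R))..(γ*R),
        Real.exp (k₁*t₁) *
          ((Real.exp (k₂*(γ*R)) - Real.exp (k₂*(R - t₁ - Real.log (Real.log R))))/k₂) := by
    intro R
    unfold Dint
    congr 1
    · congr 1; rw [hcdef]; ring
    · apply intervalIntegral.integral_congr
      intro t₁ _
      have hinner : (∫ t₂ in (R - t₁ - Real.log (Real.log R))..(γ*R),
          Real.exp (ζ*((d:ℝ)-1)*((d₂:ℝ)-1-2*α/ζ)*t₂/2)) =
          (Real.exp (k₂*(γ*R)) - Real.exp (k₂*(R - t₁ - Real.log (Real.log R))))/k₂ := by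
        rw [intervalIntegral.integral_congr (g := fun t₂ => Real.exp (k₂*t₂))
          (fun t₂ _ => by congr 1; rw [hk₂def]; ring)]
        exact exp_int k₂ hk₂ne _ _
      show Real.exp (ζ*((d:ℝ)-1)*((d₁:ℝ)-1-2*α/ζ)*t₁/2) * _ = _
      rw [hinner, show ζ*((d:ℝ)-1)*((d₁:ℝ)-1-2*α/ζ)*t₁/2 = k₁*t₁ from by rw [hk₁def]; ring]
  have hγR : Tendsto (fun R : ℝ => γ * R) atTop atTop :=
    Tendsto.const_mul_atTop hγ0 tendsto_id
  have hA1low : ∀ᶠ R in atTop,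
      Real.exp (max s₁ 0 * (γ*R)) / (2*(|s₁|+1)) ≤ aInt ζ α γ d R d₁ := by
    filter_upwards [hγR.eventually (Alow s₁)] with R h
    rw [haInt1 R]; exact h
  have hA2low : ∀ᶠ R in atTop,
      Real.exp (max s₂ 0 * (γ*R)) / (2*(|s₂|+1)) ≤ aInt ζ α γ d R d₂ := by
    filter_upwards [hγR.eventually (Alow s₂)] with R h
    rw [haInt2 R]; exact h
  have hA1zero : s₁ = 0 → ∀ R : ℝ, aInt ζ α γ d R d₁ = γ * R := by
    intro h R; rw [haInt1 R, h]; simp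
  have hA2zero : s₂ = 0 → ∀ R : ℝ, aInt ζ α γ d R d₂ = γ * R := by
    intro h R; rw [haInt2 R, h]; simp
  have hbase : ∀ᶠ R : ℝ in atTop,
      0 < R ∧ 1 ≤ Real.log R ∧ 0 ≤ Real.log (Real.log R) ∧ Real.log (Real.log R) ≤ R ∧
      (1-γ)*R - Real.log (Real.log R) ≤ γ*R := by
    filter_upwards [eventually_ge_atTop (Real.exp 1)] with R hR
    have hRpos : (0:ℝ) < R := lt_of_lt_of_le (Real.exp_pos 1) hR
    have h1 : 1 ≤ Real.log R := by rw [Real.le_log_iff_exp_le hRpos]; simpa using hR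
    have h2 : 0 ≤ Real.log (Real.log R) := Real.log_nonneg h1
    have h3 : Real.log (Real.log R) ≤ R :=
      le_trans (Real.log_le_self (by linarith)) (Real.log_le_self hRpos.le)
    refine ⟨hRpos, h1, h2, h3, by nlinarith⟩
  have hDnn : ∀ᶠ R in atTop, 0 ≤ Dint ζ α γ d d₁ d₂ R := by
    filter_upwards [hbase] with R hR
    obtain ⟨hRpos, hlog1, hll0, hllR, hLT⟩ := hR
    rw [hDeq R]
    apply mul_nonneg (Real.exp_nonneg _)
    apply intervalIntegral.integral_nonneg hLT
    intro t₁ ht₁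
    apply mul_nonneg (Real.exp_nonneg _)
    have hle : R - t₁ - Real.log (Real.log R) ≤ γ*R := by
      have := ht₁.1
      linarith
    rcases lt_or_gt_of_ne hk₂ne with hneg | hpos
    · apply div_nonneg_of_nonpos _ hneg.le
      have : k₂*(γ*R) ≤ k₂*(R - t₁ - Real.log (Real.log R)) :=
        mul_le_mul_of_nonpos_left hle hneg.le
      have := Real.exp_le_exp.2 this
      linarith
    · apply div_nonneg _ hpos.le
      have : k₂*(R - t₁ - Real.log (Real.log R)) ≤ k₂*(γ*R) :=
        mul_le_mul_of_nonneg_left hle hpos.le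
      have := Real.exp_le_exp.2 this
      linarith
  rcases lt_or_gt_of_ne hk₂ne with hk2neg | hk2pos
  · -- k₂ < 0
    have hnk2 : (0:ℝ) < -k₂ := by linarith
    have hcore : ∀ᶠ R in atTop, Dint ζ α γ d d₁ d₂ R ≤
        Real.exp (c*R) * (Real.exp (k₂*(R - Real.log (Real.log R))) / (-k₂) *
          ∫ t₁ in ((1-γ)*R - Real.log (Real.log R))..(γ*R), Real.exp ((k₁-k₂)*t₁)) := by
      filter_upwards [hbase] with R hR
      obtain ⟨hRpos, hlog1, hll0, hllR, hLT⟩ := hR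
      rw [hDeq R]
      have hmono : (∫ t₁ in ((1-γ)*R - Real.log (Real.log R))..(γ*R),
          Real.exp (k₁*t₁) *
            ((Real.exp (k₂*(γ*R)) - Real.exp (k₂*(R - t₁ - Real.log (Real.log R))))/k₂))
          ≤ ∫ t₁ in ((1-γ)*R - Real.log (Real.log R))..(γ*R),
            Real.exp (k₂*(R - Real.log (Real.log R))) / (-k₂) * Real.exp ((k₁-k₂)*t₁) := by
        apply intervalIntegral.integral_mono_on hLT
        · apply Continuous.intervalIntegrable; fun_prop
        · apply Continuous.intervalIntegrable; fun_prop
        · intro t₁ ht₁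
          have key : Real.exp (k₁*t₁) *
              (Real.exp (k₂*(R - t₁ - Real.log (Real.log R))) / (-k₂)) =
              Real.exp (k₂*(R - Real.log (Real.log R))) / (-k₂) *
                Real.exp ((k₁-k₂)*t₁) := by
            exact exp_pair _ _ _ _ _ (by ring)
          calc Real.exp (k₁*t₁) *
              ((Real.exp (k₂*(γ*R)) - Real.exp (k₂*(R - t₁ - Real.log (Real.log R))))/k₂)
              ≤ Real.exp (k₁*t₁) *
                (Real.exp (k₂*(R - t₁ - Real.log (Real.log R))) / (-k₂)) := by
                apply mul_le_mul_of_nonneg_left _ (Real.exp_nonneg _)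
                rw [show (Real.exp (k₂*(γ*R)) -
                    Real.exp (k₂*(R - t₁ - Real.log (Real.log R))))/k₂
                  = (Real.exp (k₂*(R - t₁ - Real.log (Real.log R))) -
                    Real.exp (k₂*(γ*R)))/(-k₂) from by ring]
                exact sub_div_le _ _ _ hnk2 (Real.exp_nonneg _)
            _ = _ := key
      refine le_trans (mul_le_mul_of_nonneg_left hmono (Real.exp_nonneg _)) ?_
      rw [intervalIntegral.integral_const_mul]
    rcases eq_or_lt_of_le hκnn with hκ0 | hκpos
    · -- k₁ = k₂ (κ = 0)
      have hseq : s₁ = s₂ := by linarith [hκeq]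
      have hu : ∀ᶠ R in atTop, Dint ζ α γ d d₁ d₂ R ≤
          Real.exp (s₂*R + (-k₂)*Real.log (Real.log R)) * (2*R) / (-k₂) := by
        filter_upwards [hcore, hbase] with R h1 hb
        obtain ⟨hRpos, hlog1, hll0, hllR, hLT⟩ := hb
        refine le_trans h1 ?_
        have hIle : (∫ t₁ in ((1-γ)*R - Real.log (Real.log R))..(γ*R),
            Real.exp ((k₁-k₂)*t₁)) ≤ 2*R := by
          rw [← hκ0]
          simp only [zero_mul, Real.exp_zero, intervalIntegral.integral_const, smul_eq_mul,
            mul_one]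
          nlinarith
        calc Real.exp (c*R) * (Real.exp (k₂*(R - Real.log (Real.log R))) / (-k₂) *
              ∫ t₁ in ((1-γ)*R - Real.log (Real.log R))..(γ*R), Real.exp ((k₁-k₂)*t₁))
            ≤ Real.exp (c*R) * (Real.exp (k₂*(R - Real.log (Real.log R))) / (-k₂) * (2*R)) := by
              apply mul_le_mul_of_nonneg_left _ (Real.exp_nonneg _)
              apply mul_le_mul_of_nonneg_left hIle (by positivity)
          _ = Real.exp (s₂*R + (-k₂)*Real.log (Real.log R)) * (2*R) / (-k₂) := by
              rw [show s₂*R + (-k₂)*Real.log (Real.log R) =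
                c*R + k₂*(R - Real.log (Real.log R)) from by rw [hs₂]; ring, Real.exp_add]
              field_simp [hnk2.ne']
              try ring
      rcases eq_or_ne s₂ 0 with hs2zero | hs2ne
      · -- Leaf V : s₁ = s₂ = 0
        have hs1zero : s₁ = 0 := by rw [hseq, hs2zero]
        refine mechanism _ _ (2/((-k₂)*γ^2)) 0 (-1) (-k₂)
          (Or.inr ⟨rfl, by norm_num⟩) ?_
        filter_upwards [hDnn, hu, hbase] with R h0 h1 hb
        obtain ⟨hRpos, hlog1, hll0, hllR, hLT⟩ := hb
        have hA1 : aInt ζ α γ d R d₁ = γ*R := hA1zero hs1zero R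
        have hA2 : aInt ζ α γ d R d₂ = γ*R := hA2zero hs2zero R
        refine ⟨h0, ?_, ?_⟩
        · show 0 < aInt ζ α γ d R d₁ * aInt ζ α γ d R d₂
          rw [hA1, hA2]
          positivity
        · show Dint ζ α γ d d₁ d₂ R ≤ _
          calc Dint ζ α γ d d₁ d₂ R
              ≤ Real.exp (s₂*R + (-k₂)*Real.log (Real.log R)) * (2*R) / (-k₂) := h1
            _ = 2/((-k₂)*γ^2) *
                Real.exp (0*R + (-1)*Real.log R + (-k₂)*Real.log (Real.log R)) *
                (aInt ζ α γ d R d₁ * aInt ζ α γ d R d₂) := by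
                rw [hA1, hA2, hs2zero]
                rw [show (0:ℝ)*R + (-1)*Real.log R + (-k₂)*Real.log (Real.log R) =
                  ((0:ℝ)*R + (-k₂)*Real.log (Real.log R)) + (-1)*Real.log R from by ring,
                  exp_split_neg_log hRpos]
                field_simp [hnk2.ne', hRpos.ne', hγ0.ne']
                try ring
            _ ≤ _ := le_of_eq rfl
      · -- Leaf IV : s₁ = s₂ ≠ 0
        have ha : s₂ - max s₁ 0*γ - max s₂ 0*γ < 0 := by
          rcases lt_or_gt_of_ne hs2ne with hneg | hpos
          · have h1 : max s₂ 0 = 0 := max_eq_right hneg.le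
            have h2 : (0:ℝ) ≤ max s₁ 0 := le_max_right _ _
            nlinarith
          · have h1 : max s₂ 0 = s₂ := max_eq_left hpos.le
            have h2 : max s₁ 0 = s₁ := max_eq_left (by rw [hseq]; exact hpos.le)
            rw [h1, h2, hseq]
            nlinarith
        refine mechanism _ _ ((2*(|s₁|+1))*(2*(|s₂|+1))*2/(-k₂))
          (s₂ - max s₁ 0*γ - max s₂ 0*γ) 1 (-k₂) (Or.inl ha) ?_
        filter_upwards [hDnn, hu, hA1low, hA2low, hbase] with R h0 h1 h2 h3 hb
        obtain ⟨hRpos, hlog1, hll0, hllR, hLT⟩ := hb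
        have hw1pos : 0 < Real.exp (max s₁ 0 * (γ*R)) / (2*(|s₁|+1)) := by positivity
        have hw2pos : 0 < Real.exp (max s₂ 0 * (γ*R)) / (2*(|s₂|+1)) := by positivity
        refine ⟨h0, mul_pos (lt_of_lt_of_le hw1pos h2) (lt_of_lt_of_le hw2pos h3), ?_⟩
        show Dint ζ α γ d d₁ d₂ R ≤ _
        calc Dint ζ α γ d d₁ d₂ R
            ≤ Real.exp (s₂*R + (-k₂)*Real.log (Real.log R)) * (2*R) / (-k₂) := h1
          _ = (2*(|s₁|+1))*(2*(|s₂|+1))*2/(-k₂) *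
                Real.exp ((s₂ - max s₁ 0*γ - max s₂ 0*γ)*R + 1*Real.log R +
                  (-k₂)*Real.log (Real.log R)) *
                (Real.exp (max s₁ 0 * (γ*R)) / (2*(|s₁|+1)) *
                  (Real.exp (max s₂ 0 * (γ*R)) / (2*(|s₂|+1)))) := by
              rw [exp_combine]
              rw [show ((s₂ - max s₁ 0*γ - max s₂ 0*γ)*R + 1*Real.log R +
                  (-k₂)*Real.log (Real.log R)) + max s₁ 0*(γ*R) + max s₂ 0*(γ*R) =
                  (s₂*R + (-k₂)*Real.log (Real.log R)) + 1*Real.log R from by ring,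
                exp_split_log hRpos]
              have hc₁ : (2*(|s₁|+1)) ≠ 0 := by positivity
              have hc₂ : (2*(|s₂|+1)) ≠ 0 := by positivity
              field_simp [hnk2.ne', hc₁, hc₂]
              try ring
          _ ≤ _ := by
              apply mul_le_mul_of_nonneg_left _ ?_
              · exact mul_le_mul h2 h3 hw2pos.le (le_trans hw1pos.le h2)
              · apply mul_nonneg _ (Real.exp_nonneg _)
                positivity
    · -- κ > 0
      have hu : ∀ᶠ R in atTop, Dint ζ α γ d d₁ d₂ R ≤
          Real.exp (s₂*R + (k₁-k₂)*(γ*R) + (-k₂)*Real.log (Real.log R)) /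
            ((-k₂)*(k₁-k₂)) := by
        filter_upwards [hcore] with R h1
        refine le_trans h1 ?_
        have hIle : (∫ t₁ in ((1-γ)*R - Real.log (Real.log R))..(γ*R),
            Real.exp ((k₁-k₂)*t₁)) ≤ Real.exp ((k₁-k₂)*(γ*R))/(k₁-k₂) := by
          rw [exp_int _ hκpos.ne' _ _]
          exact sub_div_le _ _ _ hκpos (Real.exp_nonneg _)
        calc Real.exp (c*R) * (Real.exp (k₂*(R - Real.log (Real.log R))) / (-k₂) *
              ∫ t₁ in ((1-γ)*R - Real.log (Real.log R))..(γ*R), Real.exp ((k₁-k₂)*t₁))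
            ≤ Real.exp (c*R) * (Real.exp (k₂*(R - Real.log (Real.log R))) / (-k₂) *
                (Real.exp ((k₁-k₂)*(γ*R))/(k₁-k₂))) := by
              apply mul_le_mul_of_nonneg_left _ (Real.exp_nonneg _)
              apply mul_le_mul_of_nonneg_left hIle (by positivity)
          _ = Real.exp (s₂*R + (k₁-k₂)*(γ*R) + (-k₂)*Real.log (Real.log R)) /
                ((-k₂)*(k₁-k₂)) := by
              rw [show s₂*R + (k₁-k₂)*(γ*R) + (-k₂)*Real.log (Real.log R) =
                c*R + (k₂*(R - Real.log (Real.log R)) + (k₁-k₂)*(γ*R)) from by rw [hs₂]; ring,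
                Real.exp_add, Real.exp_add]
              field_simp [hnk2.ne', hκpos.ne']
              try ring
      rcases eq_or_ne s₂ 0 with hs2zero | hs2ne
      · -- Leaf III : s₂ = 0, κ > 0
        have hs1pos : 0 < s₁ := by
          have := hκeq
          linarith
        have hs1κ : s₁ = k₁ - k₂ := by
          have := hκeq
          linarith
        refine mechanism _ _ ((2*(|s₁|+1))/((-k₂)*(k₁-k₂)*γ)) 0 (-1) (-k₂)
          (Or.inr ⟨rfl, by norm_num⟩) ?_
        filter_upwards [hDnn, hu, hA1low, hbase] with R h0 h1 h2 hb
        obtain ⟨hRpos, hlog1, hll0, hllR, hLT⟩ := hb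
        have hA2 : aInt ζ α γ d R d₂ = γ*R := hA2zero hs2zero R
        have hw1pos : 0 < Real.exp (max s₁ 0 * (γ*R)) / (2*(|s₁|+1)) := by positivity
        refine ⟨h0, ?_, ?_⟩
        · show 0 < aInt ζ α γ d R d₁ * aInt ζ α γ d R d₂
          rw [hA2]
          exact mul_pos (lt_of_lt_of_le hw1pos h2) (by positivity)
        · show Dint ζ α γ d d₁ d₂ R ≤ _
          calc Dint ζ α γ d d₁ d₂ R
              ≤ Real.exp (s₂*R + (k₁-k₂)*(γ*R) + (-k₂)*Real.log (Real.log R)) /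
                  ((-k₂)*(k₁-k₂)) := h1
            _ = (2*(|s₁|+1))/((-k₂)*(k₁-k₂)*γ) *
                  Real.exp (0*R + (-1)*Real.log R + (-k₂)*Real.log (Real.log R)) *
                  (Real.exp (max s₁ 0 * (γ*R)) / (2*(|s₁|+1)) * (γ*R)) := by
                rw [max_eq_left hs1pos.le, hs2zero, hs1κ]
                rw [show (0:ℝ)*R + (-1)*Real.log R + (-k₂)*Real.log (Real.log R) =
                  ((0:ℝ)*R + (-k₂)*Real.log (Real.log R)) + (-1)*Real.log R from by ring,
                  exp_split_neg_log hRpos]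
                rw [show (0:ℝ)*R + (k₁-k₂)*(γ*R) + (-k₂)*Real.log (Real.log R) =
                  ((k₁-k₂)*(γ*R)) + ((0:ℝ)*R + (-k₂)*Real.log (Real.log R)) from by ring,
                  Real.exp_add]
                have hc₁ : (2*(|k₁-k₂|+1)) ≠ 0 := by positivity
                field_simp [hnk2.ne', hκpos.ne', hγ0.ne', hRpos.ne', hc₁]
                try ring
            _ ≤ _ := by
                apply mul_le_mul_of_nonneg_left _ ?_
                · rw [hA2]
                  apply mul_le_mul_of_nonneg_right h2 (by positivity)
                · apply mul_nonneg _ (Real.exp_nonneg _)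
                  apply div_nonneg (by positivity)
                  positivity
      · -- Leaf II : s₂ ≠ 0, κ > 0
        have ha : s₂ + (k₁-k₂)*γ - max s₁ 0*γ - max s₂ 0*γ < 0 := by
          rcases lt_or_gt_of_ne hs2ne with hneg | hpos
          · have h1 : max s₂ 0 = 0 := max_eq_right hneg.le
            have h2 : s₁ ≤ max s₁ 0 := le_max_left _ _
            have h3 : k₁ - k₂ = s₁ - s₂ := hκeq
            nlinarith
          · have hs1pos : 0 < s₁ := by
              have := hκeq
              linarith
            have h1 : max s₂ 0 = s₂ := max_eq_left hpos.le
            have h2 : max s₁ 0 = s₁ := max_eq_left hs1pos.le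
            have h3 : k₁ - k₂ = s₁ - s₂ := hκeq
            rw [h1, h2, h3]
            nlinarith
        refine mechanism _ _ ((2*(|s₁|+1))*(2*(|s₂|+1))/((-k₂)*(k₁-k₂)))
          (s₂ + (k₁-k₂)*γ - max s₁ 0*γ - max s₂ 0*γ) 0 (-k₂) (Or.inl ha) ?_
        filter_upwards [hDnn, hu, hA1low, hA2low] with R h0 h1 h2 h3
        have hw1pos : 0 < Real.exp (max s₁ 0 * (γ*R)) / (2*(|s₁|+1)) := by positivity
        have hw2pos : 0 < Real.exp (max s₂ 0 * (γ*R)) / (2*(|s₂|+1)) := by positivity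
        refine ⟨h0, mul_pos (lt_of_lt_of_le hw1pos h2) (lt_of_lt_of_le hw2pos h3), ?_⟩
        show Dint ζ α γ d d₁ d₂ R ≤ _
        calc Dint ζ α γ d d₁ d₂ R
            ≤ Real.exp (s₂*R + (k₁-k₂)*(γ*R) + (-k₂)*Real.log (Real.log R)) /
                ((-k₂)*(k₁-k₂)) := h1
          _ = (2*(|s₁|+1))*(2*(|s₂|+1))/((-k₂)*(k₁-k₂)) *
                Real.exp ((s₂ + (k₁-k₂)*γ - max s₁ 0*γ - max s₂ 0*γ)*R + 0*Real.log R +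
                  (-k₂)*Real.log (Real.log R)) *
                (Real.exp (max s₁ 0 * (γ*R)) / (2*(|s₁|+1)) *
                  (Real.exp (max s₂ 0 * (γ*R)) / (2*(|s₂|+1)))) := by
              rw [exp_combine]
              rw [show ((s₂ + (k₁-k₂)*γ - max s₁ 0*γ - max s₂ 0*γ)*R + 0*Real.log R +
                  (-k₂)*Real.log (Real.log R)) + max s₁ 0*(γ*R) + max s₂ 0*(γ*R) =
                  s₂*R + (k₁-k₂)*(γ*R) + (-k₂)*Real.log (Real.log R) from by ring]
              have hc₁ : (2*(|s₁|+1)) ≠ 0 := by positivity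
              have hc₂ : (2*(|s₂|+1)) ≠ 0 := by positivity
              field_simp [hnk2.ne', hκpos.ne', hc₁, hc₂]
              try ring
          _ ≤ _ := by
              apply mul_le_mul_of_nonneg_left _ ?_
              · exact mul_le_mul h2 h3 hw2pos.le (le_trans hw1pos.le h2)
              · apply mul_nonneg _ (Real.exp_nonneg _)
                apply div_nonneg (by positivity)
                exact (mul_pos hnk2 hκpos).le
  · -- k₂ > 0
    have hk1pos : 0 < k₁ := lt_of_lt_of_le hk2pos (by linarith)
    have hs1pos : 0 < s₁ := by rw [hs₁]; linarith
    have hs2pos : 0 < s₂ := by rw [hs₂]; linarith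
    have hu : ∀ᶠ R in atTop, Dint ζ α γ d d₁ d₂ R ≤
        Real.exp (c*R + k₁*(γ*R) + k₂*(γ*R)) / (k₁*k₂) := by
      filter_upwards [hbase] with R hR
      obtain ⟨hRpos, hlog1, hll0, hllR, hLT⟩ := hR
      rw [hDeq R]
      have hmono : (∫ t₁ in ((1-γ)*R - Real.log (Real.log R))..(γ*R),
          Real.exp (k₁*t₁) *
            ((Real.exp (k₂*(γ*R)) - Real.exp (k₂*(R - t₁ - Real.log (Real.log R))))/k₂))
          ≤ ∫ t₁ in ((1-γ)*R - Real.log (Real.log R))..(γ*R),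
            Real.exp (k₂*(γ*R))/k₂ * Real.exp (k₁*t₁) := by
        apply intervalIntegral.integral_mono_on hLT
        · apply Continuous.intervalIntegrable; fun_prop
        · apply Continuous.intervalIntegrable; fun_prop
        · intro t₁ ht₁
          rw [mul_comm (Real.exp (k₂*(γ*R))/k₂)]
          apply mul_le_mul_of_nonneg_left _ (Real.exp_nonneg _)
          exact sub_div_le _ _ _ hk2pos (Real.exp_nonneg _)
      have hIeq : (∫ t₁ in ((1-γ)*R - Real.log (Real.log R))..(γ*R),
          Real.exp (k₂*(γ*R))/k₂ * Real.exp (k₁*t₁)) =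
          Real.exp (k₂*(γ*R))/k₂ * ((Real.exp (k₁*(γ*R)) -
            Real.exp (k₁*((1-γ)*R - Real.log (Real.log R))))/k₁) := by
        rw [intervalIntegral.integral_const_mul, exp_int k₁ hk1pos.ne' _ _]
      calc Real.exp (c*R) * ∫ t₁ in ((1-γ)*R - Real.log (Real.log R))..(γ*R),
            Real.exp (k₁*t₁) *
              ((Real.exp (k₂*(γ*R)) - Real.exp (k₂*(R - t₁ - Real.log (Real.log R))))/k₂)
          ≤ Real.exp (c*R) * (Real.exp (k₂*(γ*R))/k₂ * ((Real.exp (k₁*(γ*R)) -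
              Real.exp (k₁*((1-γ)*R - Real.log (Real.log R))))/k₁)) := by
            apply mul_le_mul_of_nonneg_left _ (Real.exp_nonneg _)
            rw [← hIeq]; exact hmono
        _ ≤ Real.exp (c*R) * (Real.exp (k₂*(γ*R))/k₂ * (Real.exp (k₁*(γ*R))/k₁)) := by
            apply mul_le_mul_of_nonneg_left _ (Real.exp_nonneg _)
            apply mul_le_mul_of_nonneg_left _ (by positivity)
            exact sub_div_le _ _ _ hk1pos (Real.exp_nonneg _)
        _ = Real.exp (c*R + k₁*(γ*R) + k₂*(γ*R)) / (k₁*k₂) := by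
            rw [Real.exp_add, Real.exp_add]
            field_simp [hk1pos.ne', hk2pos.ne']
            try ring
    have hC : (0:ℝ) < (2*(|s₁|+1))*(2*(|s₂|+1))/(k₁*k₂) :=
      div_pos (by positivity) (mul_pos hk1pos hk2pos)
    refine mechanism _ _ ((2*(|s₁|+1))*(2*(|s₂|+1))/(k₁*k₂)) (c - 2*γ*c) 0 0
      (Or.inl (by nlinarith)) ?_
    filter_upwards [hDnn, hu, hA1low, hA2low] with R h0 h1 h2 h3
    have hw1pos : 0 < Real.exp (max s₁ 0 * (γ*R)) / (2*(|s₁|+1)) := by positivity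
    have hw2pos : 0 < Real.exp (max s₂ 0 * (γ*R)) / (2*(|s₂|+1)) := by positivity
    refine ⟨h0, mul_pos (lt_of_lt_of_le hw1pos h2) (lt_of_lt_of_le hw2pos h3), ?_⟩
    show Dint ζ α γ d d₁ d₂ R ≤ _
    calc Dint ζ α γ d d₁ d₂ R ≤ Real.exp (c*R + k₁*(γ*R) + k₂*(γ*R)) / (k₁*k₂) := h1
      _ = (2*(|s₁|+1))*(2*(|s₂|+1))/(k₁*k₂) *
            Real.exp ((c - 2*γ*c)*R + 0*Real.log R + 0*Real.log (Real.log R)) *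
            (Real.exp (max s₁ 0 * (γ*R)) / (2*(|s₁|+1)) *
              (Real.exp (max s₂ 0 * (γ*R)) / (2*(|s₂|+1)))) := by
          rw [exp_combine]
          rw [show ((c - 2*γ*c)*R + 0*Real.log R + 0*Real.log (Real.log R)) +
              max s₁ 0*(γ*R) + max s₂ 0*(γ*R) = c*R + k₁*(γ*R) + k₂*(γ*R) from by
            rw [max_eq_left hs1pos.le, max_eq_left hs2pos.le, hs₁, hs₂]; ring]
          have hc₁ : (2*(|s₁|+1)) ≠ 0 := by positivity
          have hc₂ : (2*(|s₂|+1)) ≠ 0 := by positivity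
          field_simp [hk1pos.ne', hk2pos.ne', hc₁, hc₂]
          try ring
      _ ≤ _ := by
          apply mul_le_mul_of_nonneg_left _ (mul_nonneg hC.le (Real.exp_nonneg _))
          exact mul_le_mul h2 h3 hw2pos.le (le_trans hw1pos.le h2)
end
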